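/- arXiv:math/0303057 — 11 statements merged into one kernel-verified Lean document; each statement's English description precedes it below -/
import Mathlib

section
/- Every perfectly normal ΣΣ*-space is a QN̄-space: if X is a perfectly normal topological space such that every pointwise convergent series of non-negative real-valued functions on X converges pseudo-normally, then every sequence of real-valued functions on X converging pointwise to a function f converges quasi-normally to f. -/
open Filter Set Topology

/-- A space is a ΣΣ*-space if every pointwise convergent series of non-negative
real-valued functions converges pseudo-normally. -/
def SigmaSigmaStarSpace (X : Type*) [TopologicalSpace X] : Prop :=
  ∀ f : ℕ → X → ℝ, (∀ n x, 0 ≤ f n x) → (∀ x, Summable (fun n => f n x)) →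
    ∃ ε : ℕ → ℝ, (∀ n, 0 < ε n) ∧ Summable ε ∧
      ∀ x : X, ∀ᶠ n in atTop, f n x < ε n

/-- A space is a QN̄-space if every pointwise convergent sequence of real-valued
functions converges quasi-normally to its limit. -/
def QNbarSpace (X : Type*) [TopologicalSpace X] : Prop :=
  ∀ (f : ℕ → X → ℝ) (g : X → ℝ),
    (∀ x, Tendsto (fun n => f n x) atTop (nhds (g x))) →
    ∃ ε : ℕ → ℝ, (∀ n, 0 < ε n) ∧ Tendsto ε atTop (nhds 0) ∧
      ∀ x : X, ∀ᶠ n in atTop, |f n x - g x| < ε n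

/-!
Write `d n x = |f n x - g x|` and let `m x k` be the index from which `d n x < 2⁻ᵏ`. Feeding
the series indexed by `(k, j) ∈ ℕ × ℕ` whose `(k, j)`-th term at `x` is `2⁻ᵏ` if `j = m x k`
and `0` otherwise to the ΣΣ*-property yields summable bounds `ε (k, j)`; since `ε (k, j) → 0`
as `j → ∞`, beyond some `M k` they drop below `2⁻ᵏ`, which forces `m x k < M k` for almost
all `k`. So a single `M : ℕ → ℕ` eventually dominates every `m x`, and `εₙ = 2^{-κ n}`, with
`κ` a slowly growing inverse of `M`, witnesses quasi-normal convergence.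
-/

namespace SigmaSigmaStarSpace

variable {X : Type*} [TopologicalSpace X]

theorem exists_summable_eventually_lt {ι : Type*} (h : SigmaSigmaStarSpace X) (e : ι ≃ ℕ)
    (f : ι → X → ℝ) (hf₀ : ∀ i x, 0 ≤ f i x) (hf : ∀ x, Summable (fun i => f i x)) :
    ∃ ε : ι → ℝ, (∀ i, 0 < ε i) ∧ Summable ε ∧ ∀ x, ∀ᶠ i in cofinite, f i x < ε i := by
  obtain ⟨ε, hε₀, hε, hfε⟩ := h (fun n => f (e.symm n)) (fun n x => hf₀ _ x)
    (fun x => (e.symm.summable_iff (f := fun i => f i x)).2 (hf x))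
  refine ⟨ε ∘ e, fun i => hε₀ (e i), e.summable_iff.2 hε, fun x => ?_⟩
  rw [← Nat.cofinite_eq_atTop] at hfε
  simpa using e.injective.tendsto_cofinite.eventually (hfε x)

theorem exists_eventually_lt (h : SigmaSigmaStarSpace X) (m : X → ℕ → ℕ) :
    ∃ M : ℕ → ℕ, ∀ x, ∀ᶠ k in atTop, m x k < M k := by
  classical
  set G : ℕ × ℕ → X → ℝ := fun p x => if p.2 = m x p.1 then (1 / 2 : ℝ) ^ p.1 else 0
  have hgraph : ∀ x, Function.Injective (fun k => (k, m x k)) :=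
    fun x a b hab => congrArg Prod.fst hab
  have hG₀ : ∀ p x, 0 ≤ G p x := fun p x => by positivity
  have hG : ∀ x, Summable (fun p => G p x) := fun x => by
    refine ((hgraph x).summable_iff fun p hp => if_neg fun hpk => hp ⟨p.1, ?_⟩).1 ?_
    · exact Prod.ext rfl hpk.symm
    · simpa [Function.comp_def, G] using summable_geometric_two
  obtain ⟨ε, -, hε, hGε⟩ := h.exists_summable_eventually_lt (Denumerable.eqv (ℕ × ℕ)) G hG₀ hG
  have hrow : ∀ k, ∀ᶠ j in atTop, ε (k, j) < (1 / 2 : ℝ) ^ k := fun k =>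
    (hε.comp_injective (Prod.mk_right_injective k)).tendsto_atTop_zero.eventually
      (gt_mem_nhds (by positivity))
  choose M hM using fun k => eventually_atTop.1 (hrow k)
  refine ⟨M, fun x => ?_⟩
  have hgraph_tendsto : Tendsto (fun k => (k, m x k)) atTop cofinite :=
    Nat.cofinite_eq_atTop ▸ (hgraph x).tendsto_cofinite
  filter_upwards [hgraph_tendsto.eventually (hGε x)] with k hk
  by_contra! hMk
  simp only [G, if_pos rfl] at hk
  exact (hk.trans (hM k _ hMk)).false

end SigmaSigmaStarSpace

theorem Nat.exists_tendsto_atTop_eventually_apply_le (M : ℕ → ℕ) :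
    ∃ κ : ℕ → ℕ, Tendsto κ atTop atTop ∧ ∀ᶠ n in atTop, M (κ n) ≤ n := by
  classical
  refine ⟨fun n => Nat.findGreatest (fun k => ∀ i ≤ k, M i ≤ n) n, ?_, ?_⟩
  · refine tendsto_atTop.2 fun K => ?_
    have hM : ∀ᶠ n in atTop, ∀ i ∈ Iic K, M i ≤ n :=
      (eventually_all_finite (finite_Iic K)).2 fun i _ => eventually_ge_atTop (M i)
    filter_upwards [eventually_ge_atTop K, hM] with n hKn hMn
    exact Nat.le_findGreatest hKn hMn
  · filter_upwards [eventually_ge_atTop (M 0)] with n hn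
    exact Nat.findGreatest_spec (P := fun k => ∀ i ≤ k, M i ≤ n) (zero_le n)
      (fun i hi => by rwa [Nat.le_zero.1 hi]) _ le_rfl

theorem exists_tendsto_zero_eventually_lt_of_eventually_forall_ge {X : Type*}
    {d : ℕ → X → ℝ} {δ : ℕ → ℝ} (hδ₀ : ∀ k, 0 < δ k) (hδ : Tendsto δ atTop (𝓝 0))
    {M : ℕ → ℕ} (hM : ∀ x, ∀ᶠ k in atTop, ∀ n ≥ M k, d n x < δ k) :
    ∃ ε : ℕ → ℝ, (∀ n, 0 < ε n) ∧ Tendsto ε atTop (𝓝 0) ∧ ∀ x, ∀ᶠ n in atTop, d n x < ε n := by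
  obtain ⟨κ, hκ, hMκ⟩ := Nat.exists_tendsto_atTop_eventually_apply_le M
  refine ⟨δ ∘ κ, fun n => hδ₀ (κ n), hδ.comp hκ, fun x => ?_⟩
  filter_upwards [hκ.eventually (hM x), hMκ] with n hn hMn
  exact hn n hMn

theorem perfectlyNormal_SigmaSigmaStar_implies_QNbar_general
    {X : Type*} [TopologicalSpace X]
    (h : SigmaSigmaStarSpace X) : QNbarSpace X := by
  intro f g hfg
  have hd : ∀ x k, ∀ᶠ n in atTop, |f n x - g x| < (1 / 2 : ℝ) ^ k := fun x k => by
    have hd₀ : Tendsto (fun n => |f n x - g x|) atTop (𝓝 0) := by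
      simpa using ((hfg x).sub_const (g x)).abs
    exact hd₀.eventually (gt_mem_nhds (by positivity))
  choose m hm using fun x k => eventually_atTop.1 (hd x k)
  obtain ⟨M, hM⟩ := h.exists_eventually_lt m
  refine exists_tendsto_zero_eventually_lt_of_eventually_forall_ge
    (δ := fun k => (1 / 2 : ℝ) ^ k) (M := M) (fun k => by positivity)
    (tendsto_pow_atTop_nhds_zero_of_lt_one (by norm_num) (by norm_num)) fun x => ?_
  filter_upwards [hM x] with k hk n hn
  exact hm x k n (hk.le.trans hn)

theorem perfectlyNormal_SigmaSigmaStar_implies_QNbar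
    {X : Type*} [TopologicalSpace X] [PerfectlyNormalSpace X]
    (h : SigmaSigmaStarSpace X) : QNbarSpace X :=
  perfectlyNormal_SigmaSigmaStar_implies_QNbar_general h
end

section
/- For a nonempty topological space X, the following are equivalent: (1) X has the sequence selection property (SSP); (2) X is an s₁-space, i.e., for every subset A of C_p(X), the sequential closure of A in C_p(X) is sequentially closed (s₁(A) = s₂(A)). -/
open Filter Set Topology

/-- `C_p(X)`: continuous real-valued functions on `X` with the topology of
pointwise convergence (subspace of the product `ℝ^X`). -/
abbrev Cp (X : Type*) [TopologicalSpace X] := {f : X → ℝ // Continuous f}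

/-- The sequence selection property. -/
def SSP (X : Type*) [TopologicalSpace X] : Prop :=
  ∀ f : ℕ → ℕ → X → ℝ, (∀ n i, Continuous (f n i)) →
    (∀ n x, Tendsto (fun i => f n i x) atTop (nhds 0)) →
    ∃ i : ℕ → ℕ, ∀ x, Tendsto (fun n => f n (i n) x) atTop (nhds 0)

/-!
If `X` has the SSP and `gₙ → g` in `C_p(X)` with `gₙ ∈ s₁(A)`, pick sequences `v n i → gₙ`
from `A`; SSP applied to `v n i - gₙ` selects a single diagonal sequence `v n (i n) → g`.

Conversely, given `f n i`, let `F n i = ∑_{m ≤ n} |f m i|` and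
`A = {F n i + 1/(n+1)}`. Each constant `1/(n+1)` lies in `s₁(A)`, hence `0 ∈ s₂(A) = s₁(A)`.
A sequence `F nₖ jₖ + 1/(nₖ+1)` of `A` tending to `0` forces `nₖ → ∞` (evaluate at any point),
and since `|f m i| ≤ F n i` for `m ≤ n`, the indices `jₖ` yield the required selection.
-/

namespace Cp

variable {X : Type*} [TopologicalSpace X]

theorem tendsto_nhds_iff {ι : Type*} {l : Filter ι} {u : ι → Cp X} {g : Cp X} :
    Tendsto u l (𝓝 g) ↔ ∀ x, Tendsto (fun n => (u n).1 x) l (𝓝 (g.1 x)) := by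
  rw [tendsto_subtype_rng, tendsto_pi_nhds]

def const (c : ℝ) : Cp X := ⟨fun _ => c, continuous_const⟩

end Cp

def IsS1Space (X : Type*) [TopologicalSpace X] : Prop :=
  ∀ A : Set (Cp X), seqClosure (seqClosure A) = seqClosure A

section

variable {X : Type*} [TopologicalSpace X]

theorem SSP.isS1Space (hX : SSP X) : IsS1Space X := by
  intro A
  refine Subset.antisymm ?_ subset_seqClosure
  rintro g ⟨gs, hgs, hg⟩
  choose v hvA hv using hgs
  obtain ⟨i, hi⟩ := hX (fun n i x => (v n i).1 x - (gs n).1 x)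
    (fun n i => (v n i).2.sub (gs n).2)
    (fun n x => by simpa using (Cp.tendsto_nhds_iff.mp (hv n) x).sub_const ((gs n).1 x))
  refine ⟨fun n => v n (i n), fun n => hvA n (i n), Cp.tendsto_nhds_iff.mpr fun x => ?_⟩
  simpa using (hi x).add (Cp.tendsto_nhds_iff.mp hg x)

theorem IsS1Space.exists_diagonal_tendsto_zero [Nonempty X] (hX : IsS1Space X)
    {F : ℕ → ℕ → X → ℝ} (hcont : ∀ n i, Continuous (F n i)) (hnonneg : ∀ n i x, 0 ≤ F n i x)
    (hF : ∀ n x, Tendsto (fun i => F n i x) atTop (𝓝 0)) :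
    ∃ p : ℕ → ℕ × ℕ, Tendsto (fun k => (p k).1) atTop atTop ∧
      ∀ x, Tendsto (fun k => F (p k).1 (p k).2 x) atTop (𝓝 0) := by
  set g : ℕ × ℕ → Cp X := fun p =>
    ⟨fun x => F p.1 p.2 x + 1 / ((p.1 : ℝ) + 1), (hcont p.1 p.2).add continuous_const⟩
  have hconst : ∀ n : ℕ, Cp.const (1 / ((n : ℝ) + 1)) ∈ seqClosure (range g) := fun n =>
    ⟨fun i => g (n, i), fun i => mem_range_self _,
      Cp.tendsto_nhds_iff.mpr fun x => by simpa [g, Cp.const] using (hF n x).add_const _⟩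
  have hzero : Cp.const 0 ∈ seqClosure (range g) := by
    rw [← hX (range g)]
    exact ⟨fun n => Cp.const (1 / ((n : ℝ) + 1)), hconst,
      Cp.tendsto_nhds_iff.mpr fun _ => tendsto_one_div_add_atTop_nhds_zero_nat⟩
  obtain ⟨u, hu, hu0⟩ := hzero
  choose p hp using hu
  obtain rfl : u = g ∘ p := funext fun k => (hp k).symm
  have hlim : ∀ x, Tendsto (fun k => F (p k).1 (p k).2 x + 1 / (((p k).1 : ℝ) + 1)) atTop (𝓝 0) :=
    Cp.tendsto_nhds_iff.mp hu0
  refine ⟨p, tendsto_atTop.mpr fun m => ?_, fun x => ?_⟩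
  · obtain ⟨x₀⟩ := ‹Nonempty X›
    filter_upwards [(hlim x₀).eventually_lt_const (Nat.one_div_pos_of_nat (n := m))] with k hk
    refine le_of_not_gt fun hlt => (Nat.one_div_lt_one_div (α := ℝ) hlt).not_ge ?_
    linarith [hnonneg (p k).1 (p k).2 x₀]
  · refine squeeze_zero (fun k => hnonneg _ _ x) (fun k => ?_) (hlim x)
    have : (0 : ℝ) ≤ 1 / (((p k).1 : ℝ) + 1) := Nat.one_div_pos_of_nat.le
    linarith

theorem IsS1Space.ssp [Nonempty X] (hX : IsS1Space X) : SSP X := by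
  intro f hcont hf
  set F : ℕ → ℕ → X → ℝ := fun n i x => ∑ m ∈ Finset.range (n + 1), |f m i x|
  have hle : ∀ m n i x, m ≤ n → |f m i x| ≤ F n i x := fun m n i x hmn =>
    Finset.single_le_sum (f := fun m => |f m i x|) (fun _ _ => abs_nonneg _)
      (Finset.mem_range_succ_iff.mpr hmn)
  obtain ⟨p, hp_top, hp⟩ := hX.exists_diagonal_tendsto_zero
    (F := F) (fun n i => continuous_finsetSum _ fun m _ => (hcont m i).abs)
    (fun n i x => Finset.sum_nonneg fun _ _ => abs_nonneg _)
    (fun n x => by simpa using tendsto_finsetSum _ fun m _ => (hf m x).abs)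
  have hK : ∀ m, ∃ k, m ≤ k ∧ m ≤ (p k).1 := fun m =>
    ((eventually_ge_atTop m).and (hp_top.eventually_ge_atTop m)).exists
  choose K hKm hK using hK
  refine ⟨fun m => (p (K m)).2, fun x => squeeze_zero_norm (fun m => ?_)
    ((hp x).comp (tendsto_atTop_mono hKm tendsto_id))⟩
  exact hle _ _ _ _ (hK m)

end

theorem SSP_iff_s1_space (X : Type*) [TopologicalSpace X] [Nonempty X] :
    SSP X ↔ ∀ A : Set (Cp X), seqClosure (seqClosure A) = seqClosure A :=
  ⟨SSP.isS1Space, IsS1Space.ssp⟩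
end

section
/- Every topological space with the sequence selection property is a wQN-space: if X has SSP, then every sequence of continuous real-valued functions on X converging pointwise to 0 has a subsequence converging quasi-normally to 0. -/
open Filter Set Topology

/-- `X` is a wQN-space: every sequence of continuous functions converging
pointwise to `0` has a quasi-normally convergent subsequence. -/
def WQNSpace (X : Type*) [TopologicalSpace X] : Prop :=
  ∀ f : ℕ → X → ℝ, (∀ n, Continuous (f n)) →
    (∀ x, Tendsto (fun n => f n x) atTop (nhds 0)) →
    ∃ φ : ℕ → ℕ, StrictMono φ ∧
      ∃ ε : ℕ → ℝ, (∀ n, 0 < ε n) ∧ Tendsto ε atTop (nhds 0) ∧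
        ∀ x, ∀ᶠ n in atTop, |f (φ n) x| < ε n

theorem SSP_implies_wQN (X : Type*) [TopologicalSpace X] (h : SSP X) :
    WQNSpace X := by
  intro f hf hf0
  -- auxiliary double sequence
  set g : ℕ → ℕ → X → ℝ := fun n i x => min 1 (2 ^ n * |f (i + n) x|) with hg
  have hgc : ∀ n i, Continuous (g n i) := fun n i =>
    continuous_const.min (continuous_const.mul (hf (i + n)).abs)
  have hg0 : ∀ n x, Tendsto (fun i => g n i x) atTop (nhds 0) := by
    intro n x
    have h1 : Tendsto (fun i : ℕ => i + n) atTop atTop := tendsto_add_atTop_nat n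
    have h2 : Tendsto (fun i => |f (i + n) x|) atTop (nhds 0) := by
      have := ((hf0 x).comp h1).abs
      simpa using this
    have h3 : Tendsto (fun i => (2 : ℝ) ^ n * |f (i + n) x|) atTop (nhds 0) := by
      simpa using h2.const_mul ((2 : ℝ) ^ n)
    have h4 := (tendsto_const_nhds : Tendsto (fun _ : ℕ => (1 : ℝ)) atTop (nhds 1)).min h3
    simpa [min_eq_right (zero_le_one (α := ℝ))] using h4
  obtain ⟨i, hi⟩ := h g hgc hg0
  -- shifted indices
  set ψ : ℕ → ℕ := fun n => i n + n with hψ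
  have hψge : ∀ n, n ≤ ψ n := fun n => Nat.le_add_left n (i n)
  -- pointwise eventual smallness
  have key : ∀ x, ∀ᶠ n in atTop, |f (ψ n) x| < (2 : ℝ)⁻¹ ^ n := by
    intro x
    filter_upwards [(hi x).eventually (gt_mem_nhds one_pos)] with n hn
    have : (2 : ℝ) ^ n * |f (ψ n) x| < 1 := by
      rcases min_lt_iff.mp hn with h1 | h2
      · exact absurd h1 (lt_irrefl 1)
      · exact h2
    have h2pos : (0 : ℝ) < 2 ^ n := by positivity
    rw [inv_pow, inv_eq_one_div, lt_div_iff₀ h2pos]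
    linarith [this]
  -- build strictly increasing sequence of n's
  let nk : ℕ → ℕ := fun k => Nat.rec 0 (fun _ m => ψ m + 1) k
  have hnk_succ : ∀ k, nk (k + 1) = ψ (nk k) + 1 := fun k => rfl
  have hnk_mono : StrictMono nk := by
    apply strictMono_nat_of_lt_succ
    intro k
    calc nk k ≤ ψ (nk k) := hψge _
    _ < ψ (nk k) + 1 := Nat.lt_succ_self _
  refine ⟨fun k => ψ (nk k), ?_, fun k => (2 : ℝ)⁻¹ ^ (nk k), ?_, ?_, ?_⟩
  · apply strictMono_nat_of_lt_succ
    intro k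
    calc ψ (nk k) < ψ (nk k) + 1 := Nat.lt_succ_self _
    _ = nk (k + 1) := (hnk_succ k).symm
    _ ≤ ψ (nk (k + 1)) := hψge _
  · intro k; positivity
  · have hb : Tendsto (fun k : ℕ => (2 : ℝ)⁻¹ ^ k) atTop (nhds 0) :=
      tendsto_pow_atTop_nhds_zero_of_lt_one (by norm_num) (by norm_num)
    apply squeeze_zero (fun k => by positivity) (fun k => ?_) hb
    exact pow_le_pow_of_le_one (by norm_num) (by norm_num) (hnk_mono.le_apply)
  · intro x
    exact hnk_mono.tendsto_atTop.eventually (key x)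
end

section
/- (Fremlin) Every wQN-space has the sequence selection property: if every sequence of continuous real-valued functions on X converging pointwise to 0 has a quasi-normally convergent subsequence, then whenever f_{n,i} are continuous real-valued functions on X with lim_{i→∞} f_{n,i}(x) = 0 for every x ∈ X and every n, there exist indices i_n such that lim_{n→∞} f_{n,i_n}(x) = 0 for every x ∈ X. -/
open Filter Set Topology

/-- Fremlin: every wQN-space has the sequence selection property. -/
theorem wQN_implies_SSP (X : Type*) [TopologicalSpace X] (h : WQNSpace X) :
    SSP X := by
  intro f hcont hptw
  -- the combined sequence
  set g : ℕ → X → ℝ := fun k x =>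
    (Finset.range (k + 1)).sup' (by simp) (fun n => min |f n k x| ((1 / 2 : ℝ) ^ n)) with hg
  have hgcont : ∀ k, Continuous (g k) := by
    intro k
    apply Continuous.finset_sup'_apply
    intro n _
    exact ((hcont n k).abs).min continuous_const
  have hgnonneg : ∀ k x, 0 ≤ g k x := by
    intro k x
    refine le_trans ?_ (Finset.le_sup' _ (Finset.self_mem_range_succ k))
    exact le_min (abs_nonneg _) (by positivity)
  have hgptw : ∀ x, Tendsto (fun k => g k x) atTop (nhds 0) := by
    intro x
    rw [NormedAddCommGroup.tendsto_nhds_zero]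
    intro ε hε
    obtain ⟨N, hN⟩ : ∃ N : ℕ, (1 / 2 : ℝ) ^ N < ε := by
      have := tendsto_pow_atTop_nhds_zero_of_lt_one (by norm_num : (0:ℝ) ≤ 1/2)
        (by norm_num : (1/2 : ℝ) < 1)
      exact ((this.eventually (gt_mem_nhds hε)).exists)
    -- for each n ≤ N, eventually |f n k x| < ε
    have hrow : ∀ n, ∀ᶠ k in atTop, |f n k x| < ε := by
      intro n
      have := (hptw n x).eventually (gt_mem_nhds hε)
      simpa [Real.norm_eq_abs] using
        (NormedAddCommGroup.tendsto_nhds_zero.mp (hptw n x)) ε hε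
    have hall : ∀ᶠ k in atTop, ∀ n ≤ N, |f n k x| < ε :=
      (eventually_all_finset (Finset.range (N+1))).2 (fun n _ => hrow n) |>.mono
        (by
          intro k hk n hn
          exact hk n (Finset.mem_range_succ_iff.mpr hn))
    filter_upwards [hall] with k hk
    rw [Real.norm_eq_abs, abs_of_nonneg (hgnonneg k x)]
    rw [hg]
    apply Finset.sup'_lt_iff (by simp) |>.2
    intro n hn
    rcases le_or_gt n N with hnN | hnN
    · exact lt_of_le_of_lt (min_le_left _ _) (hk n hnN)
    · refine lt_of_le_of_lt (min_le_right _ _) ?_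
      calc (1/2 : ℝ) ^ n ≤ (1/2 : ℝ) ^ N := by
            apply pow_le_pow_of_le_one (by norm_num) (by norm_num) hnN.le
        _ < ε := hN
  obtain ⟨φ, hφ, ε, hεpos, hε0, hεqn⟩ := h g hgcont hgptw
  -- extract a sub-subsequence with ε (ψ k) < (1/2)^k
  obtain ⟨ψ, hψ, hψε⟩ : ∃ ψ : ℕ → ℕ, StrictMono ψ ∧ ∀ k, ε (ψ k) < (1/2 : ℝ) ^ k := by
    refine extraction_forall_of_eventually (P := fun n k => ε k < (1/2:ℝ)^n) ?_
    intro n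
    exact hε0.eventually (gt_mem_nhds (by positivity : (0:ℝ) < (1/2) ^ n))
  refine ⟨fun n => φ (ψ n), fun x => ?_⟩
  obtain ⟨K, hK⟩ := eventually_atTop.mp (hεqn x)
  have key : ∀ n ≥ K, |f n (φ (ψ n)) x| < (1/2 : ℝ) ^ n := by
    intro n hn
    have h1 : |g (φ (ψ n)) x| < ε (ψ n) := hK (ψ n) (le_trans hn (hψ.le_apply))
    have h2 : g (φ (ψ n)) x < (1/2 : ℝ) ^ n :=
      lt_trans (lt_of_abs_lt h1) (hψε n)
    have h3 : min |f n (φ (ψ n)) x| ((1/2 : ℝ) ^ n) ≤ g (φ (ψ n)) x := by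
      rw [hg]
      apply Finset.le_sup' (fun m => min |f m (φ (ψ n)) x| ((1/2 : ℝ) ^ m))
      rw [Finset.mem_range_succ_iff]
      calc n ≤ ψ n := hψ.le_apply
        _ ≤ φ (ψ n) := hφ.le_apply
    have h4 : min |f n (φ (ψ n)) x| ((1/2 : ℝ) ^ n) < (1/2 : ℝ) ^ n := lt_of_le_of_lt h3 h2
    rcases min_lt_iff.mp h4 with h5 | h5
    · exact h5
    · exact absurd h5 (lt_irrefl _)
  apply squeeze_zero_norm' (a := fun n => (1/2 : ℝ) ^ n)
  · filter_upwards [eventually_ge_atTop K] with n hn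
    exact (key n hn).le
  · exact tendsto_pow_atTop_nhds_zero_of_lt_one (by norm_num) (by norm_num)
end

section
/- Every S₁(Γ,Γ)-space has the sequence selection property: if for every sequence (U_n) of γ-covers of X one can select U_n ∈ U_n so that {U_n : n ∈ ℕ} is a γ-cover of X, then whenever f_{n,i} are continuous real-valued functions on X with lim_{i→∞} f_{n,i}(x) = 0 for every x ∈ X and every n, there exist indices i_n such that lim_{n→∞} f_{n,i_n}(x) = 0 for every x ∈ X. -/
open Filter Set Topology

/-- A γ-cover of `X`: an infinite family of open sets such that every point
belongs to all but finitely many members. -/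
def IsGammaCover {X : Type*} [TopologicalSpace X] (𝒰 : Set (Set X)) : Prop :=
  𝒰.Infinite ∧ (∀ U ∈ 𝒰, IsOpen U) ∧ ∀ x : X, {U ∈ 𝒰 | x ∉ U}.Finite

/-- The selection property `S₁(Γ,Γ)`. -/
def S1GammaGamma (X : Type*) [TopologicalSpace X] : Prop :=
  ∀ 𝒰 : ℕ → Set (Set X), (∀ n, IsGammaCover (𝒰 n)) →
    ∃ U : ℕ → Set X, (∀ n, U n ∈ 𝒰 n) ∧ IsGammaCover (Set.range U)

/-! For each `n`, the open sets `{x | |f n i x| < 1/(n+1)}` (`i ∈ ℕ`) contain every point for all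
but finitely many `i`. If such a family has only finitely many distinct members, one of them is
all of `X` (pigeonhole). Otherwise it is a γ-cover, and a selection from these covers gives
indices `i n` with `|f n (i n) x| < 1/(n+1)` for almost all `n`, provided that the selection never
picks the same set twice. To guarantee this, we first shrink the covers to infinite subfamilies
that are pairwise disjoint; Hall's marriage theorem for countably many infinite sets provides them. -/

open Function

theorem exists_injective_forall_mem_of_infinite {ι α : Type*} [Countable ι] {A : ι → Set α}
    (hA : ∀ i, (A i).Infinite) : ∃ f : ι → α, Injective f ∧ ∀ i, f i ∈ A i := by
  classical
  obtain ⟨N, hN⟩ := exists_injective_nat ι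
  let pts : ι → ℕ ↪ α := fun i => (hA i).natEmbedding.trans (Embedding.subtype _)
  -- Hall's condition holds because `i` is offered `N i + 1` candidates.
  let t : ι → Finset α := fun i => (Finset.range (N i + 1)).map (pts i)
  obtain ⟨f, hf, hft⟩ := (Finset.all_card_le_biUnion_card_iff_exists_injective t).mp <| by
    intro s
    rcases s.eq_empty_or_nonempty with rfl | hs
    · simp
    obtain ⟨i, hi, hmax⟩ := s.exists_max_image N hs
    calc s.card ≤ (Finset.range (N i + 1)).card :=
          Finset.card_le_card_of_injOn N
            (fun j hj => Finset.mem_range_succ_iff.mpr (hmax j hj)) hN.injOn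
      _ = (t i).card := by simp [t]
      _ ≤ (s.biUnion t).card := Finset.card_le_card (Finset.subset_biUnion_of_mem t hi)
  refine ⟨f, hf, fun i => ?_⟩
  obtain ⟨k, -, hk⟩ := Finset.mem_map.mp (hft i)
  rw [← hk]
  exact (Set.Infinite.natEmbedding (A i) (hA i) k).2

theorem exists_eq_univ_of_finite_range {ι α : Type*} [Infinite ι] {V : ι → Set α}
    (hfin : (range V).Finite) (hV : ∀ x, ∀ᶠ i in cofinite, x ∈ V i) : ∃ i, V i = univ := by
  have := hfin.to_subtype
  obtain ⟨⟨-, i, rfl⟩, hfiber⟩ := Finite.exists_infinite_fiber (rangeFactorization V)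
  have hfreq : ∃ᶠ j in cofinite, V j = V i := by
    refine frequently_cofinite_iff_infinite.mpr ?_
    convert infinite_coe_iff.mp hfiber using 1
    ext j
    simp [rangeFactorization_eq_iff]
  refine ⟨i, eq_univ_of_forall fun x => ?_⟩
  obtain ⟨j, hj, hx⟩ := (hfreq.and_eventually (hV x)).exists
  exact hj ▸ hx

section

variable {X : Type*} [TopologicalSpace X]

theorem isGammaCover_range_iff {ι : Type*} [Infinite ι] {V : ι → Set X} (hV : Injective V) :
    IsGammaCover (range V) ↔ (∀ i, IsOpen (V i)) ∧ ∀ x, ∀ᶠ i in cofinite, x ∈ V i := by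
  have hbad : ∀ x, {U ∈ range V | x ∉ U} = V '' {i | x ∉ V i} := by
    intro x
    ext U
    constructor
    · rintro ⟨⟨i, rfl⟩, hx⟩
      exact ⟨i, hx, rfl⟩
    · rintro ⟨i, hx, rfl⟩
      exact ⟨mem_range_self i, hx⟩
  simp only [IsGammaCover, forall_mem_range, hbad, infinite_range_of_injective hV, true_and,
    eventually_cofinite, finite_image_iff hV.injOn]

namespace S1GammaGamma

theorem exists_eventually_mem_of_injective (h : S1GammaGamma X) {V : ℕ → ℕ → Set X}
    (hinj : Injective (uncurry V)) (hopen : ∀ n i, IsOpen (V n i))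
    (hV : ∀ n x, ∀ᶠ i in cofinite, x ∈ V n i) :
    ∃ k : ℕ → ℕ, ∀ x, ∀ᶠ n in cofinite, x ∈ V n (k n) := by
  have hinj_fiber (n : ℕ) : Injective (V n) := fun i j hij =>
    congrArg Prod.snd (hinj (a₁ := (n, i)) (a₂ := (n, j)) hij)
  obtain ⟨U, hU, hγ⟩ := h (fun n => range (V n)) fun n =>
    (isGammaCover_range_iff (hinj_fiber n)).mpr ⟨hopen n, hV n⟩
  choose k hk using hU
  obtain rfl : (fun n => V n (k n)) = U := funext hk
  have hinj_sel : Injective fun n => V n (k n) := fun m n hmn =>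
    congrArg Prod.fst (hinj (a₁ := (m, k m)) (a₂ := (n, k n)) hmn)
  exact ⟨k, ((isGammaCover_range_iff hinj_sel).mp hγ).2⟩

theorem exists_eventually_mem_of_infinite (h : S1GammaGamma X) {V : ℕ → ℕ → Set X}
    (hopen : ∀ n i, IsOpen (V n i)) (hV : ∀ n x, ∀ᶠ i in cofinite, x ∈ V n i)
    (hinf : ∀ n, (range (V n)).Infinite) :
    ∃ k : ℕ → ℕ, ∀ x, ∀ᶠ n in cofinite, x ∈ V n (k n) := by
  -- Thin the covers out so that no set is a member of two of them.
  obtain ⟨g, hg, hgV⟩ := exists_injective_forall_mem_of_infinite fun p : ℕ × ℕ => hinf p.1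
  choose σ hσ using fun n j => hgV (n, j)
  have hσinj (n : ℕ) : Injective (σ n) := fun i j hij =>
    congrArg Prod.snd (hg ((hσ n i).symm.trans ((congrArg (V n) hij).trans (hσ n j))))
  have hWg : uncurry (fun n j => V n (σ n j)) = g := funext fun p => hσ p.1 p.2
  obtain ⟨k, hk⟩ := h.exists_eventually_mem_of_injective (hWg ▸ hg)
    (fun n j => hopen n (σ n j)) fun n x => (hσinj n).tendsto_cofinite.eventually (hV n x)
  exact ⟨fun n => σ n (k n), hk⟩

theorem exists_eventually_mem (h : S1GammaGamma X) {V : ℕ → ℕ → Set X}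
    (hopen : ∀ n i, IsOpen (V n i)) (hV : ∀ n x, ∀ᶠ i in cofinite, x ∈ V n i) :
    ∃ k : ℕ → ℕ, ∀ x, ∀ᶠ n in cofinite, x ∈ V n (k n) := by
  classical
  by_cases htriv : ∀ n, ∃ i, V n i = univ
  · choose k hk using htriv
    exact ⟨k, fun x => Eventually.of_forall fun n => (hk n).symm ▸ mem_univ x⟩
  obtain ⟨m, hm⟩ := not_forall.mp htriv
  have hinf (n : ℕ) (hn : ¬ ∃ i, V n i = univ) : (range (V n)).Infinite :=
    fun hfin => hn (exists_eq_univ_of_finite_range hfin (hV n))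
  -- The families containing `univ` need no selection; `V m` stands in for them.
  let W n := if ∃ i, V n i = univ then V m else V n
  obtain ⟨k, hk⟩ := h.exists_eventually_mem_of_infinite (V := W)
    (fun n i => by dsimp only [W]; split_ifs <;> apply hopen)
    (fun n x => by dsimp only [W]; split_ifs <;> apply hV)
    (fun n => by dsimp only [W]; split_ifs with hn; exacts [hinf m hm, hinf n hn])
  refine ⟨fun n => if hn : ∃ i, V n i = univ then hn.choose else k n,
    fun x => (hk x).mono fun n hn => ?_⟩
  by_cases htriv_n : ∃ i, V n i = univ
  · simp only [dif_pos htriv_n, htriv_n.choose_spec, mem_univ]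
  · simpa [W, htriv_n] using hn

end S1GammaGamma

end

theorem S1GammaGamma_implies_SSP (X : Type*) [TopologicalSpace X]
    (h : S1GammaGamma X) : SSP X := by
  intro f hcont hlim
  let V (n i : ℕ) : Set X := {x | |f n i x| < 1 / ((n : ℝ) + 1)}
  obtain ⟨k, hk⟩ := h.exists_eventually_mem (V := V)
    (fun n i => isOpen_lt (hcont n i).abs continuous_const)
    fun n x => by
      simpa [V, Real.dist_0_eq_abs, Nat.cofinite_eq_atTop] using
        Metric.tendsto_nhds.mp (hlim n x) _ Nat.one_div_pos_of_nat
  refine ⟨k, fun x => squeeze_zero_norm' ?_ tendsto_one_div_add_atTop_nhds_zero_nat⟩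
  rw [← Nat.cofinite_eq_atTop]
  exact (hk x).mono fun n hn => le_of_lt hn
end

section
/- (Bukovský–Haleš) For a perfectly normal topological space X, the following are equivalent: (1) X is an mQN-space; (2) X has property E**_ω. -/
open Filter Set Topology

/-- `X` is an mQN-space: every non-increasing sequence of continuous functions
converging pointwise to `0` converges quasi-normally to `0`. -/
def MQNSpace (X : Type*) [TopologicalSpace X] : Prop :=
  ∀ f : ℕ → X → ℝ, (∀ n, Continuous (f n)) →
    (∀ n x, f (n + 1) x ≤ f n x) →
    (∀ x, Tendsto (fun n => f n x) atTop (nhds 0)) →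
    ∃ ε : ℕ → ℝ, (∀ n, 0 < ε n) ∧ Tendsto ε atTop (nhds 0) ∧
      ∀ x, ∀ᶠ n in atTop, |f n x| < ε n

/-- Property E**_ω: for every sequence of countable open covers there are finite
subfamilies whose unions form a γ-cover, or finitely many of them cover. -/
def EStarStarOmega (X : Type*) [TopologicalSpace X] : Prop :=
  ∀ 𝒰 : ℕ → Set (Set X),
    (∀ n, (𝒰 n).Countable) →
    (∀ n, ∀ U ∈ 𝒰 n, IsOpen U) →
    (∀ n, ⋃₀ 𝒰 n = univ) →
    ∃ 𝒱 : ℕ → Set (Set X),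
      (∀ n, 𝒱 n ⊆ 𝒰 n) ∧ (∀ n, (𝒱 n).Finite) ∧
      ((∀ x : X, ∀ᶠ n in atTop, x ∈ ⋃₀ 𝒱 n) ∨
        ∃ F : Finset ℕ, ∀ x : X, ∃ n ∈ F, x ∈ ⋃₀ 𝒱 n)


/-- Quasi-normal convergence from control along a subsequence. -/
lemma lemA {X : Type*} (f : ℕ → X → ℝ)
    (hanti : ∀ x, Antitone fun n => f n x) (hnn : ∀ n x, 0 ≤ f n x)
    (t : ℕ → ℝ) (htpos : ∀ n, 0 < t n) (htlim : Tendsto t atTop (nhds 0))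
    (M : ℕ → ℕ) (h : ∀ x, ∀ᶠ n in atTop, f (M n) x < t n) :
    ∃ ε : ℕ → ℝ, (∀ n, 0 < ε n) ∧ Tendsto ε atTop (nhds 0) ∧
      ∀ x, ∀ᶠ n in atTop, |f n x| < ε n := by
  classical
  set ν : ℕ → ℕ := fun k => Nat.findGreatest (fun n => M n ≤ k) k with hν
  refine ⟨fun k => t (ν k), fun k => htpos _, ?_, ?_⟩
  · have hνtop : Tendsto ν atTop atTop := by
      refine tendsto_atTop.2 fun j => eventually_atTop.2 ⟨max j (M j), fun k hk => ?_⟩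
      exact Nat.le_findGreatest (le_trans (le_max_left _ _) hk)
        (le_trans (le_max_right _ _) hk)
    exact htlim.comp hνtop
  · intro x
    obtain ⟨N, hN⟩ := eventually_atTop.1 (h x)
    refine eventually_atTop.2 ⟨max N (M N), fun k hk => ?_⟩
    have h1 : N ≤ k := le_trans (le_max_left _ _) hk
    have h2 : M N ≤ k := le_trans (le_max_right _ _) hk
    have hspec : M (ν k) ≤ k := Nat.findGreatest_spec (P := fun n => M n ≤ k) h1 h2
    have hge : N ≤ ν k := Nat.le_findGreatest h1 h2
    calc |f k x| = f k x := abs_of_nonneg (hnn _ _)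
      _ ≤ f (M (ν k)) x := hanti x hspec
      _ < t (ν k) := hN _ hge

/-- A finite subfamily of a monotone family is contained in one member. -/
lemma lemB {X : Type*} (A : ℕ → Set X) (hA : Monotone A) {𝒱 : Set (Set X)}
    (h𝒱 : 𝒱.Finite) (hsub : 𝒱 ⊆ Set.range A) : ∃ m, ⋃₀ 𝒱 ⊆ A m := by
  classical
  refine ⟨h𝒱.toFinset.sup fun S => if h : ∃ k, A k = S then h.choose else 0, ?_⟩
  rintro x ⟨S, hS, hx⟩
  obtain ⟨k, hk⟩ := hsub hS
  have hmem : ∃ k, A k = S := ⟨k, hk⟩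
  have hA1 : A hmem.choose = S := hmem.choose_spec
  have hle := Finset.le_sup (f := fun S => if h : ∃ k, A k = S then h.choose else 0)
    (h𝒱.mem_toFinset.2 hS)
  rw [dif_pos hmem] at hle
  rw [← hA1] at hx
  exact hA hle hx

/-- In a perfectly normal space, every open set is a cozero set. -/
lemma lemC {X : Type*} [TopologicalSpace X] [PerfectlyNormalSpace X] {U : Set X}
    (hU : IsOpen U) : ∃ c : X → ℝ, Continuous c ∧ (∀ x, 0 ≤ c x) ∧ ∀ x, x ∈ U ↔ 0 < c x := by
  have hGδ : IsGδ Uᶜ := PerfectlyNormalSpace.closed_gdelta hU.isClosed_compl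
  obtain ⟨T, Topen, Tcount, hT⟩ := hGδ
  rcases T.eq_empty_or_nonempty with rfl | hne
  · have hUe : U = ∅ := by
      have : Uᶜ = univ := by simpa using hT
      rw [← compl_compl U, this, compl_univ]
    exact ⟨fun _ => 0, continuous_const, fun _ => le_refl 0, by simp [hUe]⟩
  · obtain ⟨V, hV⟩ := Tcount.exists_eq_range hne
    have hVopen : ∀ n, IsOpen (V n) := fun n => Topen _ (by rw [hV]; exact mem_range_self n)
    have hUc : Uᶜ = ⋂ n, V n := by rw [hT, hV, sInter_range]
    have key : ∀ n : ℕ, ∃ g : C(X, ℝ), EqOn g 0 Uᶜ ∧ EqOn g 1 (V n)ᶜ ∧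
        ∀ x, g x ∈ Icc (0:ℝ) 1 := by
      intro n
      apply exists_continuous_zero_one_of_isClosed hU.isClosed_compl (hVopen n).isClosed_compl
      rw [disjoint_compl_right_iff_subset, hUc]
      exact iInter_subset _ n
    choose g hg0 hg1 hg01 using key
    have hnn : ∀ n x, (0:ℝ) ≤ (1/2 : ℝ)^n * g n x :=
      fun n x => mul_nonneg (by positivity) (hg01 n x).1
    have hle : ∀ n x, (1/2 : ℝ)^n * g n x ≤ (1/2:ℝ)^n :=
      fun n x => mul_le_of_le_one_right (by positivity) (hg01 n x).2
    have hsum : ∀ x, Summable fun n => (1/2 : ℝ)^n * g n x := fun x =>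
      Summable.of_nonneg_of_le (hnn · x) (hle · x) summable_geometric_two
    refine ⟨fun x => ∑' n, (1/2 : ℝ)^n * g n x, ?_, fun x => tsum_nonneg (hnn · x), fun x => ?_⟩
    · refine continuous_tsum (fun n => continuous_const.mul (g n).continuous)
        summable_geometric_two (fun n x => ?_)
      rw [Real.norm_eq_abs, abs_of_nonneg (hnn n x)]
      exact hle n x
    · constructor
      · intro hx
        have hnotin : x ∉ ⋂ n, V n := by rw [← hUc]; exact fun h => h hx
        obtain ⟨n, hn⟩ := by simpa [mem_iInter] using hnotin
        have h1 : g n x = 1 := hg1 n hn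
        have := Summable.le_tsum (hsum x) n (fun j _ => hnn j x)
        have hpos : (0:ℝ) < (1/2:ℝ)^n * g n x := by rw [h1]; positivity
        linarith
      · intro hpos
        by_contra hxU
        have hz : ∀ n, (1/2 : ℝ)^n * g n x = 0 := fun n => by
          rw [hg0 n hxU]; simp
        simp only at hpos
        rw [tsum_congr hz, tsum_zero] at hpos
        exact lt_irrefl _ hpos
lemma backward {X : Type*} [TopologicalSpace X] (hE : EStarStarOmega X) : MQNSpace X := by
  intro f hcont hmono hlim
  have hanti : ∀ x, Antitone fun n => f n x := fun x => antitone_nat_of_succ_le fun n => hmono n x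
  have hnn : ∀ n x, 0 ≤ f n x := fun n x =>
    le_of_tendsto (hlim x) (eventually_atTop.2 ⟨n, fun k hk => hanti x hk⟩)
  set A : ℕ → ℕ → ℕ → Set X := fun j n k => {x | f k x < (1/2)^j / (n+1)} with hA
  have hApos : ∀ j n : ℕ, (0:ℝ) < (1/2)^j / (n+1) := fun j n => by positivity
  have hAmono : ∀ j n, Monotone (A j n) := fun j n k l hkl x hx =>
    lt_of_le_of_lt (hanti x hkl) hx
  have hAopen : ∀ j n, ∀ U ∈ Set.range (A j n), IsOpen U := by
    rintro j n U ⟨k, rfl⟩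
    exact isOpen_lt (hcont k) continuous_const
  have hAcov : ∀ j n, ⋃₀ Set.range (A j n) = univ := by
    intro j n
    refine eq_univ_of_forall fun x => ?_
    obtain ⟨k, hk⟩ := ((hlim x).eventually_lt_const (hApos j n)).exists
    exact ⟨A j n k, mem_range_self k, hk⟩
  choose 𝒱 hsub hfin halt using fun j =>
    hE (fun n => Set.range (A j n)) (fun n => countable_range _) (hAopen j) (hAcov j)
  choose m hm using fun j n => lemB (A j n) (hAmono j n) (hfin j n) (hsub j n)
  by_cases hc : ∃ j, ∀ x : X, ∀ᶠ n in atTop, x ∈ ⋃₀ 𝒱 j n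
  · obtain ⟨j, hγ⟩ := hc
    refine lemA f hanti hnn (fun n => (1/2)^j / (n+1)) (hApos j) ?_ (m j) ?_
    · have := tendsto_one_div_add_atTop_nhds_zero_nat.const_mul ((1/2:ℝ)^j)
      simpa [div_eq_mul_inv, one_div, mul_comm] using this
    · intro x
      filter_upwards [hγ x] with n hn
      exact hm j n hn
  · have hright : ∀ j, ∃ F : Finset ℕ, ∀ x : X, ∃ n ∈ F, x ∈ ⋃₀ 𝒱 j n :=
      fun j => ((halt j).resolve_left fun h => hc ⟨j, h⟩)
    choose F hF using hright
    refine lemA f hanti hnn (fun j => (1/2:ℝ)^j) (fun j => by positivity)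
      (tendsto_pow_atTop_nhds_zero_of_lt_one (by norm_num) (by norm_num))
      (fun j => (F j).sup (m j)) fun x => Eventually.of_forall fun j => ?_
    obtain ⟨n, hnF, hx⟩ := hF j x
    have h1 : f (m j n) x < (1/2)^j / (n+1) := hm j n hx
    have h2 : f ((F j).sup (m j)) x ≤ f (m j n) x := hanti x (Finset.le_sup hnF)
    have h3 : (1/2:ℝ)^j / (n+1) ≤ (1/2)^j := by
      apply div_le_self (by positivity)
      have : (0:ℝ) ≤ (n:ℝ) := Nat.cast_nonneg n
      linarith
    linarith
lemma forward {X : Type*} [TopologicalSpace X] [PerfectlyNormalSpace X]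
    (hm : MQNSpace X) : EStarStarOmega X := by
  classical
  intro 𝒰 hcount hopen hcov
  rcases isEmpty_or_nonempty X with hX | hX
  · exact ⟨fun _ => ∅, fun n => empty_subset _, fun _ => finite_empty,
      Or.inl fun x => (IsEmpty.false x).elim⟩
  have hne : ∀ n, (𝒰 n).Nonempty := by
    intro n
    obtain ⟨x⟩ := hX
    have hx : x ∈ ⋃₀ 𝒰 n := (hcov n).symm ▸ mem_univ x
    obtain ⟨U, hU, -⟩ := hx
    exact ⟨U, hU⟩
  choose e he using fun n => (hcount n).exists_eq_range (hne n)
  have heopen : ∀ n i, IsOpen (e n i) := fun n i =>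
    hopen n _ (by rw [he n]; exact mem_range_self i)
  choose c hccont hcnn hciff using fun n i => lemC (heopen n i)
  set Cs : ℕ → ℕ → X → ℝ := fun n k x => ∑ i ∈ Finset.range (k+1), c n i x with hCsdef
  have hCcont : ∀ n k, Continuous (Cs n k) := fun n k =>
    continuous_finset_sum _ fun i _ => hccont n i
  have hCnn : ∀ n k x, 0 ≤ Cs n k x := fun n k x =>
    Finset.sum_nonneg fun i _ => hcnn n i x
  have hCmono : ∀ n x, Monotone fun k => Cs n k x := fun n x k l hkl =>
    Finset.sum_le_sum_of_subset_of_nonneg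
      (Finset.range_subset_range.2 (by omega)) (fun i _ _ => hcnn n i x)
  set g : ℕ → ℕ → X → ℝ := fun n k x => max 0 (1 - k * Cs n k x) with hgdef
  have hgcont : ∀ n k, Continuous (g n k) := fun n k =>
    continuous_const.max (continuous_const.sub (continuous_const.mul (hCcont n k)))
  have hg0 : ∀ n k x, 0 ≤ g n k x := fun n k x => le_max_left _ _
  have hg1 : ∀ n k x, g n k x ≤ 1 := fun n k x =>
    max_le zero_le_one (by
      have := mul_nonneg (Nat.cast_nonneg (α := ℝ) k) (hCnn n k x)
      linarith)
  have hganti : ∀ n x, Antitone fun k => g n k x := by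
    intro n x k l hkl
    have h1 : (k:ℝ) * Cs n k x ≤ (l:ℝ) * Cs n l x :=
      mul_le_mul (Nat.cast_le.2 hkl) (hCmono n x hkl) (hCnn n k x) (Nat.cast_nonneg l)
    exact max_le_max (le_refl 0) (by linarith)
  set f : ℕ → X → ℝ := fun k x => ∑' n, (1/2:ℝ)^n * g n k x with hfdef
  have hterm_nn : ∀ n k x, 0 ≤ (1/2:ℝ)^n * g n k x := fun n k x =>
    mul_nonneg (by positivity) (hg0 n k x)
  have hterm_le : ∀ n k x, (1/2:ℝ)^n * g n k x ≤ (1/2:ℝ)^n := fun n k x =>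
    mul_le_of_le_one_right (by positivity) (hg1 n k x)
  have hsumm : ∀ k x, Summable fun n => (1/2:ℝ)^n * g n k x := fun k x =>
    Summable.of_nonneg_of_le (fun n => hterm_nn n k x) (fun n => hterm_le n k x)
      summable_geometric_two
  have hfcont : ∀ k, Continuous (f k) := by
    intro k
    refine continuous_tsum (fun n => continuous_const.mul (hgcont n k))
      summable_geometric_two (fun n x => ?_)
    rw [Real.norm_eq_abs, abs_of_nonneg (hterm_nn n k x)]
    exact hterm_le n k x
  have hfmono : ∀ k x, f (k+1) x ≤ f k x := fun k x =>
    Summable.tsum_le_tsum (fun n => mul_le_mul_of_nonneg_left (hganti n x (Nat.le_succ k))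
      (by positivity)) (hsumm _ x) (hsumm _ x)
  have hflim : ∀ x, Tendsto (fun k => f k x) atTop (nhds 0) := by
    intro x
    have hab : ∀ n : ℕ, Tendsto (fun k => (1/2:ℝ)^n * g n k x) atTop (nhds 0) := by
      intro n
      have hx : x ∈ ⋃₀ 𝒰 n := (hcov n).symm ▸ mem_univ x
      rw [he n] at hx
      obtain ⟨U, ⟨i, rfl⟩, hxU⟩ := hx
      have hci : 0 < c n i x := (hciff n i x).1 hxU
      obtain ⟨K, hK⟩ := exists_nat_ge (1 / c n i x)
      have hz : ∀ k ≥ max i K, (1/2:ℝ)^n * g n k x = 0 := by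
        intro k hk
        have hik : i ≤ k := le_trans (le_max_left _ _) hk
        have hKk : (K:ℝ) ≤ k := Nat.cast_le.2 (le_trans (le_max_right _ _) hk)
        have hCge : c n i x ≤ Cs n k x :=
          Finset.single_le_sum (f := fun i => c n i x) (fun j _ => hcnn n j x)
            (Finset.mem_range_succ_iff.2 hik)
        have h1 : (1:ℝ) ≤ (k:ℝ) * Cs n k x := by
          have hk1 : 1 / c n i x ≤ (k:ℝ) := hK.trans hKk
          have h2 : (1:ℝ) ≤ (k:ℝ) * c n i x := by
            rw [div_le_iff₀ hci] at hk1
            linarith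
          have h3 : (k:ℝ) * c n i x ≤ (k:ℝ) * Cs n k x :=
            mul_le_mul_of_nonneg_left hCge (Nat.cast_nonneg k)
          linarith
        have : g n k x = 0 := max_eq_left (by linarith)
        rw [this, mul_zero]
      have heq : (fun k => (1/2:ℝ)^n * g n k x) =ᶠ[atTop] fun _ => 0 :=
        eventually_atTop.2 ⟨max i K, hz⟩
      exact Tendsto.congr' heq.symm tendsto_const_nhds
    have := tendsto_tsum_of_dominated_convergence
      (f := fun k (n : ℕ) => (1/2:ℝ)^n * g n k x) (g := fun _ => 0)
      (bound := fun n => (1/2:ℝ)^n) summable_geometric_two hab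
      (Eventually.of_forall fun k n => by
        rw [Real.norm_eq_abs, abs_of_nonneg (hterm_nn n k x)]; exact hterm_le n k x)
    rw [show (∑' (_ : ℕ), (0:ℝ)) = 0 from tsum_zero] at this
    exact this
  obtain ⟨ε, hεpos, hεlim, hq⟩ := hm f hfcont hfmono hflim
  have hKex : ∀ n : ℕ, ∃ K, n ≤ K ∧ ε K ≤ (1/2:ℝ)^n := by
    intro n
    obtain ⟨N, hN⟩ := eventually_atTop.1
      (hεlim.eventually_lt_const (show (0:ℝ) < (1/2)^n by positivity))
    exact ⟨max n N, le_max_left _ _, (hN _ (le_max_right _ _)).le⟩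
  choose K hKge hKε using hKex
  refine ⟨fun n => e n '' Iic (K n), fun n => ?_, fun n => (finite_Iic _).image _, Or.inl ?_⟩
  · rw [he n]; exact image_subset_range _ _
  · intro x
    obtain ⟨N, hN⟩ := eventually_atTop.1 (hq x)
    refine eventually_atTop.2 ⟨N, fun n hn => ?_⟩
    have h1 : f (K n) x < ε (K n) :=
      (le_abs_self _).trans_lt (hN (K n) (hn.trans (hKge n)))
    have h2 : (1/2:ℝ)^n * g n (K n) x ≤ f (K n) x :=
      Summable.le_tsum (hsumm _ x) n (fun j _ => hterm_nn j _ x)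
    have h3 : (1/2:ℝ)^n * g n (K n) x < (1/2:ℝ)^n := lt_of_le_of_lt h2 (h1.trans_le (hKε n))
    have hp : (0:ℝ) < (1/2)^n := by positivity
    have h4 : g n (K n) x < 1 := by nlinarith
    have h5 : 0 < Cs n (K n) x := by
      by_contra h
      push_neg at h
      have hC0 : Cs n (K n) x = 0 := le_antisymm h (hCnn n (K n) x)
      have : g n (K n) x = 1 := by
        simp only [hgdef, hC0, mul_zero, sub_zero]
        exact max_eq_right zero_le_one
      rw [this] at h4
      exact lt_irrefl _ h4
    have h6 : ∃ i ∈ Finset.range (K n + 1), 0 < c n i x := by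
      by_contra h
      push_neg at h
      have : Cs n (K n) x ≤ 0 := Finset.sum_nonpos fun i hi => h i hi
      linarith
    obtain ⟨i, hi, hci⟩ := h6
    exact ⟨e n i, mem_image_of_mem _ (mem_Iic.2 (Finset.mem_range_succ_iff.1 hi)),
      (hciff n i x).2 hci⟩


/-- Bukovský–Haleš: for perfectly normal spaces, mQN is equivalent to E**_ω. -/
theorem mQN_iff_EStarStarOmega (X : Type*) [TopologicalSpace X]
    [PerfectlyNormalSpace X] :
    MQNSpace X ↔ EStarStarOmega X :=
  ⟨forward, backward⟩
end

section
/- Every set of reals satisfying S₁(B_Γ,B_Γ) is a σ-set: if X ⊆ ℝ is such that for every sequence (U_n) of countable γ-covers of X by Borel subsets of ℝ there exist U_n ∈ U_n with {U_n : n ∈ ℕ} a γ-cover of X, then every subset of X which is relatively F_σ in X is relatively G_δ in X. -/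
open Filter Set Topology

/-- A γ-cover of `X`: an infinite family of sets such that every point of `X`
belongs to all but finitely many members. -/
def IsGammaCoverOf (X : Set ℝ) (𝒰 : Set (Set ℝ)) : Prop :=
  𝒰.Infinite ∧ ∀ x ∈ X, {U ∈ 𝒰 | x ∉ U}.Finite

/-- `X` satisfies `S₁(B_Γ, B_Γ)`: from every sequence of countable γ-covers of
`X` by Borel subsets of `ℝ` one can select single members forming a γ-cover. -/
def S1BorelGammaGamma (X : Set ℝ) : Prop :=
  ∀ 𝒰 : ℕ → Set (Set ℝ),
    (∀ n, (𝒰 n).Countable ∧ (∀ U ∈ 𝒰 n, MeasurableSet U) ∧ IsGammaCoverOf X (𝒰 n)) →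
    ∃ U : ℕ → Set ℝ, (∀ n, U n ∈ 𝒰 n) ∧ IsGammaCoverOf X (Set.range U)

/-!
Write the relatively F_σ set as the trace on `X` of an increasing union `⋃ Fₙ` of closed
subsets of `ℝ`. For each `n`, the sets `(Fₙ ∪ (thickening (1/(m+1)) Fₙ)ᶜ) \ {m}`, `m ∈ ℕ`,
form a Borel γ-cover of `X`. Thinning a selection from these covers to pairwise distinct members
yields indices `nᵢ → ∞` and radii `rᵢ` such that a point of `X` outside `⋃ Fₙ` eventually avoids
the open sets `Tᵢ = thickening rᵢ F_{nᵢ}`, while a point inside lies in `Tᵢ` for all large `i`.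
So the trace of `⋃ Fₙ` is `{x | ∃ᶠ i, x ∈ Tᵢ}`, a countable intersection of open sets.
-/

theorem isGδ_setOf_frequently_mem {α : Type*} [TopologicalSpace α] {O : ℕ → Set α}
    (hO : ∀ i, IsOpen (O i)) : IsGδ {x | ∃ᶠ i in atTop, x ∈ O i} := by
  have h : {x | ∃ᶠ i in atTop, x ∈ O i} = ⋂ k, ⋃ i ≥ k, O i := by
    ext x
    simp only [mem_ofPred_eq, frequently_atTop, mem_iInter, mem_iUnion, exists_prop]
  rw [h]
  exact IsGδ.iInter_of_isOpen fun k => isOpen_biUnion fun i _ => hO i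

theorem exists_monotone_isClosed_preimage_eq_iUnion {α : Type*} [TopologicalSpace α]
    {X : Set α} {C : ℕ → Set X} (hC : ∀ n, IsClosed (C n)) :
    ∃ F : ℕ → Set α, (∀ n, IsClosed (F n)) ∧ Monotone F ∧
      ⋃ n, C n = ((↑) : X → α) ⁻¹' ⋃ n, F n := by
  choose E hE hEC using fun n => isClosed_induced_iff.mp (hC n)
  refine ⟨accumulate E, fun n => ?_, monotone_accumulate, ?_⟩
  · rw [accumulate_def]
    exact (finite_Iic n).isClosed_biUnion fun j _ => hE j
  · simp only [iUnion_accumulate, preimage_iUnion, hEC]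

theorem infinite_range_of_eventually_mem {α : Type*} {W : ℕ → Set α}
    (hev : ∀ t, ∀ᶠ m in atTop, t ∈ W m) (hne : ∀ m, W m ≠ univ) : (range W).Infinite := by
  intro hfin
  have := hfin.to_subtype
  obtain ⟨⟨_, m, rfl⟩, hfiber⟩ := Finite.exists_infinite_fiber (rangeFactorization W)
  obtain ⟨t, ht⟩ := (ne_univ_iff_exists_notMem _).mp (hne m)
  have hmiss : {m' | t ∉ W m'}.Finite :=
    eventually_cofinite.mp (Nat.cofinite_eq_atTop.symm ▸ hev t : ∀ᶠ m' in cofinite, t ∈ W m')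
  refine infinite_coe_iff.mp hfiber (hmiss.subset fun m' hm' => ?_)
  have hW : W m' = W m := congrArg Subtype.val hm'
  exact show t ∉ W m' from hW ▸ ht

theorem isGammaCoverOf_range {X : Set ℝ} {W : ℕ → Set ℝ}
    (hev : ∀ t, ∀ᶠ m in atTop, t ∈ W m) (hne : ∀ m, W m ≠ univ) :
    IsGammaCoverOf X (range W) := by
  refine ⟨infinite_range_of_eventually_mem hev hne, fun x _ => ?_⟩
  have hmiss : {m | x ∉ W m}.Finite :=
    eventually_cofinite.mp (Nat.cofinite_eq_atTop.symm ▸ hev x : ∀ᶠ m in cofinite, x ∈ W m)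
  refine (hmiss.image W).subset ?_
  rintro _ ⟨⟨m, rfl⟩, hx⟩
  exact ⟨m, hx, rfl⟩

theorem IsGammaCoverOf.exists_tendsto_eventually_mem {X : Set ℝ} {U : ℕ → Set ℝ}
    (h : IsGammaCoverOf X (range U)) :
    ∃ e : ℕ → ℕ, Tendsto e atTop atTop ∧ ∀ x ∈ X, ∀ᶠ i in atTop, x ∈ U (e i) := by
  have := h.1.to_subtype
  let g := Infinite.natEmbedding (range U)
  choose e he using fun i => (g i).2
  have hinj : (U ∘ e).Injective := fun a b hab =>
    g.injective (Subtype.ext ((he a).symm.trans (hab.trans (he b))))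
  refine ⟨e, hinj.of_comp.nat_tendsto_atTop, fun x hx => ?_⟩
  rw [← Nat.cofinite_eq_atTop]
  filter_upwards [hinj.tendsto_cofinite (h.2 x hx).compl_mem_cofinite] with i hi
  by_contra hxi
  exact hi ⟨mem_range_self _, hxi⟩

theorem Filter.Tendsto.eventually_notMem_thickening {α ι : Type*} [PseudoMetricSpace α]
    {l : Filter ι} {δ : ι → ℝ} (hδ : Tendsto δ l (𝓝 0)) {F : Set α} {t : α}
    (ht : t ∉ closure F) : ∀ᶠ i in l, t ∉ Metric.thickening (δ i) F := by
  simp only [Metric.closure_eq_iInter_thickening, mem_iInter, not_forall] at ht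
  obtain ⟨ε, hε, htε⟩ := ht
  filter_upwards [hδ.eventually (gt_mem_nhds hε)] with i hi
  exact fun h => htε (Metric.thickening_mono hi.le F h)

open Metric in
/-- Removing the point `m` keeps every member proper, which makes the cover infinite. -/
def separatingCover (F : Set ℝ) (m : ℕ) : Set ℝ :=
  (F ∪ (thickening (1 / ((m : ℝ) + 1)) F)ᶜ) \ {(m : ℝ)}

theorem MeasurableSet.separatingCover {F : Set ℝ} (hF : MeasurableSet F) (m : ℕ) :
    MeasurableSet (separatingCover F m) :=
  (hF.union Metric.isOpen_thickening.measurableSet.compl).diff (measurableSet_singleton _)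

theorem isGammaCoverOf_range_separatingCover (X : Set ℝ) {F : Set ℝ} (hF : IsClosed F) :
    IsGammaCoverOf X (range (separatingCover F)) := by
  refine isGammaCoverOf_range (fun t => ?_) fun m hm => ?_
  · have hne : ∀ᶠ m : ℕ in atTop, (m : ℝ) ≠ t := tendsto_natCast_atTop_atTop.eventually_ne_atTop t
    by_cases htF : t ∈ F
    · filter_upwards [hne] with m hm using ⟨Or.inl htF, hm.symm⟩
    · filter_upwards [hne, tendsto_one_div_add_atTop_nhds_zero_nat.eventually_notMem_thickening
        (hF.closure_eq.symm ▸ htF)] with m hm hth using ⟨Or.inr hth, hm.symm⟩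
  · exact (hm.symm ▸ mem_univ (m : ℝ) : (m : ℝ) ∈ separatingCover F m).2 rfl

theorem S1BorelGammaGamma.isGδ_preimage_iUnion {X : Set ℝ} (h : S1BorelGammaGamma X)
    {F : ℕ → Set ℝ} (hF : ∀ n, IsClosed (F n)) (hmono : Monotone F) :
    IsGδ (((↑) : X → ℝ) ⁻¹' ⋃ n, F n) := by
  obtain ⟨U, hU, hγ⟩ := h (fun n => range (separatingCover (F n))) fun n =>
    ⟨countable_range _, forall_mem_range.2 (hF n).measurableSet.separatingCover,
      isGammaCoverOf_range_separatingCover X (hF n)⟩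
  choose ms hms using hU
  obtain ⟨e, he, hev⟩ := hγ.exists_tendsto_eventually_mem
  have key : ((↑) : X → ℝ) ⁻¹' ⋃ n, F n =
      {x : X | ∃ᶠ i in atTop, ↑x ∈ Metric.thickening (1 / ((ms (e i) : ℝ) + 1)) (F (e i))} := by
    ext x
    simp only [mem_preimage, mem_iUnion, mem_ofPred_eq]
    constructor
    · rintro ⟨j, hxj⟩
      exact ((he.eventually_ge_atTop j).mono fun i hi =>
        Metric.self_subset_thickening (by positivity) _ (hmono hi hxj)).frequently
    · intro hfreq
      by_contra! hx
      refine not_frequently.mpr ((hev x x.2).mono fun i hi => ?_) hfreq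
      rw [← hms] at hi
      exact hi.1.resolve_left (hx _)
  rw [key]
  exact isGδ_setOf_frequently_mem fun i => Metric.isOpen_thickening.preimage continuous_subtype_val

/-- Every set of reals satisfying `S₁(B_Γ, B_Γ)` is a σ-set: every relatively
F_σ subset of `X` is relatively G_δ. -/
theorem S1BorelGammaGamma_implies_sigma_set (X : Set ℝ)
    (h : S1BorelGammaGamma X) :
    ∀ A : Set X,
      (∃ C : ℕ → Set X, (∀ n, IsClosed (C n)) ∧ A = ⋃ n, C n) → IsGδ A := by
  rintro A ⟨C, hC, rfl⟩
  obtain ⟨F, hF, hmono, hCF⟩ := exists_monotone_isClosed_preimage_eq_iUnion hC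
  rw [hCF]
  exact h.isGδ_preimage_iUnion hF hmono
end

section
/- (Tsaban) If X is a set of real numbers such that C_p(X) has the weak Fréchet–Urysohn (Reznichenko) property, then no continuous image of X is a subbase for a non-feeble filter on ℕ: for every continuous map Φ from X to the Cantor space P(ℕ) = 2^ℕ such that every intersection of finitely many sets from Φ[X] is infinite, the filter on ℕ generated by Φ[X] together with the cofinite sets is feeble. -/
open Filter Set Topology

/-- The weak Fréchet–Urysohn (Reznichenko) property. -/
def WeakFrechetUrysohn (Z : Type*) [TopologicalSpace Z] : Prop :=
  ∀ A : Set Z, ∀ z ∈ closure A \ A,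
    ∃ 𝓕 : Set (Set Z), 𝓕.Countable ∧ 𝓕.Infinite ∧
      (∀ F ∈ 𝓕, F ⊆ A ∧ F.Finite) ∧ 𝓕.PairwiseDisjoint id ∧
      ∀ U ∈ nhds z, {F ∈ 𝓕 | U ∩ F = ∅}.Finite

/-- A filter on ℕ is feeble if there is an increasing interval partition
`[n_k, n_{k+1})` met by every member of the filter for all but finitely many
`k`. -/
def IsFeeble (𝔽 : Filter ℕ) : Prop :=
  ∃ n : ℕ → ℕ, n 0 = 0 ∧ StrictMono n ∧
    ∀ A ∈ 𝔽, ∀ᶠ k in atTop, ∃ m ∈ A, n k ≤ m ∧ m < n (k + 1)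

/-- Tsaban: if `C_p(X)` has the Reznichenko property, then no continuous image
of `X` in the Cantor space `P(ℕ) = 2^ℕ` is a subbase for a non-feeble filter
on ℕ: whenever all finite intersections of the image sets are infinite, the
filter generated by the image together with the cofinite sets is feeble. -/
theorem Reznichenko_image_generates_feeble_filter (X : Set ℝ)
    (h : WeakFrechetUrysohn (Cp X))
    (Φ : X → (ℕ → Bool)) (hΦ : Continuous Φ)
    (hfin : ∀ S : Finset X, {n : ℕ | ∀ x ∈ S, Φ x n = true}.Infinite) :
    IsFeeble (Filter.generate
      ({A : Set ℕ | ∃ x : X, A = {n | Φ x n = true}} ∪ {A : Set ℕ | Aᶜ.Finite})) := by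
  classical
  by_cases hX : Nonempty X
  case neg =>
    refine ⟨id, rfl, strictMono_id, ?_⟩
    intro A hA
    rw [Filter.mem_generate_iff] at hA
    obtain ⟨t, htG, htfin, htsub⟩ := hA
    have hc : (⋂₀ t)ᶜ.Finite := by
      rw [Set.compl_sInter]
      apply Set.Finite.sUnion (htfin.image _)
      rintro s ⟨g, hg, rfl⟩
      rcases htG hg with h1 | h2
      · exact absurd h1 (by rintro ⟨x, -⟩; exact hX ⟨x⟩)
      · exact h2
    obtain ⟨N, hN⟩ := hc.bddAbove
    filter_upwards [eventually_gt_atTop N] with k hk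
    refine ⟨k, htsub ?_, le_refl k, Nat.lt_succ_self k⟩
    by_contra hmem
    exact absurd (hN hmem) (not_le.mpr hk)
  obtain ⟨x0⟩ := hX
  -- the sequence of functions
  have hcont : ∀ n : ℕ, Continuous
      (fun x : X => (if Φ x n = true then (0:ℝ) else 1) + ((n:ℝ)+1)⁻¹) := by
    intro n
    apply Continuous.add _ continuous_const
    exact (continuous_of_discreteTopology
      (f := fun b : Bool => if b = true then (0:ℝ) else 1)).comp
      ((continuous_apply n).comp hΦ)
  set f : ℕ → Cp X := fun n =>
    ⟨fun x => (if Φ x n = true then (0:ℝ) else 1) + ((n:ℝ)+1)⁻¹, hcont n⟩ with hfdef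
  have hpos : ∀ n : ℕ, (0:ℝ) < ((n:ℝ)+1)⁻¹ := fun n => by positivity
  have hle1 : ∀ n : ℕ, ((n:ℝ)+1)⁻¹ ≤ 1 := by
    intro n
    rw [inv_le_one_iff₀]
    right
    have : (0:ℝ) ≤ (n:ℝ) := Nat.cast_nonneg n
    linarith
  have hfval : ∀ (n : ℕ) (x : X),
      (f n).1 x = (if Φ x n = true then (0:ℝ) else 1) + ((n:ℝ)+1)⁻¹ := fun n x => rfl
  have hfinj : Function.Injective f := by
    intro n m hnm
    have hv : (f n).1 x0 = (f m).1 x0 := by rw [hnm]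
    rw [hfval, hfval] at hv
    have hn := hpos n; have hm := hpos m; have h1n := hle1 n; have h1m := hle1 m
    have heq : ((n:ℝ)+1)⁻¹ = ((m:ℝ)+1)⁻¹ := by
      split_ifs at hv <;> linarith
    have h12 : ((n:ℝ)+1) = ((m:ℝ)+1) := inv_inj.mp heq
    have : (n:ℝ) = (m:ℝ) := by linarith
    exact_mod_cast this
  set z : Cp X := ⟨fun _ => 0, continuous_const⟩ with hzdef
  set AA : Set (Cp X) := Set.range f with hAAdef
  have hzA : z ∉ AA := by
    rintro ⟨n, hn⟩
    have hv : (f n).1 x0 = (0:ℝ) := by rw [hn]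
    rw [hfval] at hv
    have := hpos n
    split_ifs at hv <;> linarith
  -- z is in the closure of AA
  have hclos : z ∈ closure AA := by
    rw [mem_closure_iff_nhds]
    intro U hU
    rw [hzdef, nhds_subtype_eq_comap, Filter.mem_comap] at hU
    obtain ⟨V, hV, hVU⟩ := hU
    rw [nhds_pi, Filter.mem_pi] at hV
    obtain ⟨I, hIfin, tt, htt, httV⟩ := hV
    -- choose radii
    have hball : ∀ x : X, ∃ ε : ℝ, 0 < ε ∧ Metric.ball (0:ℝ) ε ⊆ tt x := by
      intro x
      obtain ⟨ε, hε, hb⟩ := Metric.mem_nhds_iff.mp (htt x)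
      exact ⟨ε, hε, hb⟩
    choose eps heps hball using hball
    -- choose thresholds
    have hthr : ∀ x : X, ∃ N : ℕ, ∀ m : ℕ, N ≤ m → ((m:ℝ)+1)⁻¹ < eps x := by
      intro x
      obtain ⟨N, hN⟩ := exists_nat_gt (eps x)⁻¹
      refine ⟨N, fun m hm => ?_⟩
      have h1 : (eps x)⁻¹ < (m:ℝ)+1 := by
        have : (N:ℝ) ≤ (m:ℝ) := Nat.cast_le.mpr hm
        linarith
      have h2 : (0:ℝ) < (m:ℝ)+1 := by positivity
      calc ((m:ℝ)+1)⁻¹ < ((eps x)⁻¹)⁻¹ := by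
            apply inv_strictAnti₀ (inv_pos.mpr (heps x)) h1
        _ = eps x := inv_inv _
    choose thr hthr using hthr
    set S : Finset X := hIfin.toFinset with hSdef
    obtain ⟨m, hmS, hm⟩ := (hfin S).exists_gt (S.sup thr)
    refine ⟨f m, hVU ?_, ⟨m, rfl⟩⟩
    apply httV
    intro x hxI
    have hxS : x ∈ S := by rw [hSdef]; exact hIfin.mem_toFinset.mpr hxI
    have hΦx : Φ x m = true := hmS x hxS
    apply hball x
    rw [Metric.mem_ball, Real.dist_eq, sub_zero]
    have hvx : (f m).1 x = ((m:ℝ)+1)⁻¹ := by rw [hfval, hΦx]; simp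
    show |(f m).1 x| < eps x
    rw [hvx, abs_of_pos (hpos m)]
    exact hthr x m (le_of_lt (lt_of_le_of_lt (Finset.le_sup hxS) hm))
  obtain ⟨𝓕, -, hinf, hsub, hdisj, hnbhd⟩ := h AA z ⟨hclos, hzA⟩
  -- choice of fresh members of 𝓕
  have key : ∀ (n : ℕ) (used : Finset (Set (Cp X))),
      ∃ F, F ∈ 𝓕 ∧ F ∉ used ∧ F.Nonempty ∧ ∀ m, f m ∈ F → n ≤ m := by
    intro n used
    have hbad : {F ∈ 𝓕 | ∃ m, m < n ∧ f m ∈ F}.Finite := by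
      have hss : {F ∈ 𝓕 | ∃ m, m < n ∧ f m ∈ F} ⊆
          ⋃ m ∈ Set.Iio n, {F ∈ 𝓕 | f m ∈ F} := by
        rintro F ⟨hF, m, hm, hfm⟩
        exact Set.mem_biUnion hm ⟨hF, hfm⟩
      refine Set.Finite.subset (Set.Finite.biUnion (Set.finite_Iio n) ?_) hss
      intro m _
      apply Set.Subsingleton.finite
      rintro F1 ⟨h1, hm1⟩ F2 ⟨h2, hm2⟩
      by_contra hne
      exact Set.disjoint_left.mp (hdisj h1 h2 hne) hm1 hm2
    have hrem : (𝓕 \ ({F ∈ 𝓕 | ∃ m, m < n ∧ f m ∈ F} ∪ ↑used ∪ {∅})).Infinite :=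
      hinf.diff ((hbad.union used.finite_toSet).union (Set.finite_singleton _))
    obtain ⟨F, hF𝓕, hFnot⟩ := hrem.nonempty
    simp only [Set.mem_union, not_or, Set.mem_singleton_iff, Finset.mem_coe,
      Set.mem_setOf_eq] at hFnot
    refine ⟨F, hF𝓕, hFnot.1.2, Set.nonempty_iff_ne_empty.mpr hFnot.2, ?_⟩
    intro m hfm
    by_contra hlt
    exact hFnot.1.1 ⟨hF𝓕, m, Nat.lt_of_not_le hlt, hfm⟩
  choose pick hp1 hp2 hp3 hp4 using key
  -- bounds for members of 𝓕
  have bnd : ∀ F : Set (Cp X), ∃ b : ℕ, F ∈ 𝓕 → ∀ m, f m ∈ F → m < b := by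
    intro F
    by_cases hF : F ∈ 𝓕
    · have hFfin : (f ⁻¹' F).Finite :=
        Set.Finite.preimage (hfinj.injOn) (hsub F hF).2
      obtain ⟨b, hb⟩ := hFfin.bddAbove
      exact ⟨b+1, fun _ m hm => Nat.lt_succ_of_le (hb hm)⟩
    · exact ⟨0, fun hc => absurd hc hF⟩
  choose b hb using bnd
  -- the recursion
  set step : ℕ × Finset (Set (Cp X)) → ℕ × Finset (Set (Cp X)) :=
    fun p => (max (p.1 + 1) (b (pick p.1 p.2)), insert (pick p.1 p.2) p.2) with hstep
  set st : ℕ → ℕ × Finset (Set (Cp X)) :=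
    fun j => Nat.rec ((0 : ℕ), (∅ : Finset (Set (Cp X)))) (fun _ p => step p) j with hst
  have hst0 : st 0 = (0, ∅) := rfl
  have hsts : ∀ j, st (j+1) = step (st j) := fun j => rfl
  set nn : ℕ → ℕ := fun j => (st j).1 with hnn
  set FF : ℕ → Set (Cp X) := fun j => pick (st j).1 (st j).2 with hFF
  have hstep1 : ∀ j, nn (j+1) = max (nn j + 1) (b (FF j)) := fun j => rfl
  have hstep2 : ∀ j, (st (j+1)).2 = insert (FF j) (st j).2 := fun j => rfl
  have hmono : StrictMono nn := by
    apply strictMono_nat_of_lt_succ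
    intro j
    rw [hstep1]
    exact lt_of_lt_of_le (Nat.lt_succ_self _) (le_max_left _ _)
  have hFF𝓕 : ∀ j, FF j ∈ 𝓕 := fun j => hp1 _ _
  have hFFnotused : ∀ j, FF j ∉ (st j).2 := fun j => hp2 _ _
  have hlow : ∀ j m, f m ∈ FF j → nn j ≤ m := fun j => hp4 _ _
  have hhigh : ∀ j m, f m ∈ FF j → m < nn (j+1) := by
    intro j m hm
    rw [hstep1]
    exact lt_of_lt_of_le (hb (FF j) (hFF𝓕 j) m hm) (le_max_right _ _)
  have hused : ∀ j j', j ≤ j' → (st j).2 ⊆ (st j').2 := by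
    intro j j' hle
    induction hle with
    | refl => exact subset_rfl
    | step h ih => rename_i j'' hj''
                   exact ih.trans (by rw [hstep2]; exact Finset.subset_insert _ _)
  have hFFmem : ∀ j, FF j ∈ (st (j+1)).2 := by
    intro j; rw [hstep2]; exact Finset.mem_insert_self _ _
  have hFFinj : Function.Injective FF := by
    intro j j' hjj'
    by_contra hne
    rcases Nat.lt_or_ge j j' with hlt | hge
    · exact hFFnotused j' (hused (j+1) j' hlt (by rw [← hjj']; exact hFFmem j))
    · have hlt : j' < j := lt_of_le_of_ne hge (Ne.symm hne)
      exact hFFnotused j (hused (j'+1) j hlt (by rw [hjj']; exact hFFmem j'))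
  -- conclude
  refine ⟨nn, rfl, hmono, ?_⟩
  intro A hA
  rw [Filter.mem_generate_iff] at hA
  obtain ⟨t, htG, htfin, htsub⟩ := hA
  -- witnesses for first-form generators
  have hxw : ∀ g : Set ℕ, ∃ x : X,
      (∃ x' : X, g = {n | Φ x' n = true}) → g = {n | Φ x n = true} := by
    intro g
    by_cases hg : ∃ x' : X, g = {n | Φ x' n = true}
    · exact ⟨hg.choose, fun _ => hg.choose_spec⟩
    · exact ⟨x0, fun hc => absurd hc hg⟩
  choose xw hxw using hxw
  set S : Finset X := htfin.toFinset.image xw with hSdef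
  -- bound for the cofinite part
  have hD : (⋃ g ∈ t, if (∃ x' : X, g = {n | Φ x' n = true})
      then (∅ : Set ℕ) else gᶜ).Finite := by
    apply Set.Finite.biUnion htfin
    intro g hg
    split_ifs with hform
    · exact Set.finite_empty
    · rcases htG hg with h1 | h2
      · exact absurd h1 hform
      · exact h2
  obtain ⟨N0, hN0⟩ := hD.bddAbove
  -- membership criterion
  have hmem : ∀ m : ℕ, (∀ x ∈ S, Φ x m = true) → N0 < m → m ∈ ⋂₀ t := by
    intro m hmS hmN
    intro g hg
    by_cases hform : ∃ x' : X, g = {n | Φ x' n = true}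
    · have hgx : g = {n | Φ (xw g) n = true} := hxw g hform
      have hxwS : xw g ∈ S := by
        rw [hSdef]
        exact Finset.mem_image_of_mem xw (htfin.mem_toFinset.mpr hg)
      rw [hgx]
      exact hmS (xw g) hxwS
    · by_contra hmg
      have hmD : m ∈ ⋃ g ∈ t, if (∃ x' : X, g = {n | Φ x' n = true})
          then (∅ : Set ℕ) else gᶜ := by
        apply Set.mem_biUnion hg
        rw [if_neg hform]
        exact hmg
      exact absurd (hN0 hmD) (not_le.mpr hmN)
  -- the neighborhood
  set V : Set (X → ℝ) := ⋂ x ∈ S, (fun g : X → ℝ => g x) ⁻¹' Metric.ball (0:ℝ) (1/2)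
    with hVdef
  have hVopen : IsOpen V :=
    Set.Finite.isOpen_biInter S.finite_toSet
      (fun x _ => (Metric.isOpen_ball).preimage (continuous_apply x))
  have hzV : z.1 ∈ V := by
    rw [hVdef]
    apply Set.mem_biInter
    intro x _
    simp [Metric.mem_ball, hzdef]
  set U : Set (Cp X) := Subtype.val ⁻¹' V with hUdef
  have hU : U ∈ nhds z := by
    rw [hzdef, nhds_subtype_eq_comap]
    exact Filter.preimage_mem_comap (hVopen.mem_nhds hzV)
  -- key property of U
  have hUprop : ∀ m : ℕ, f m ∈ U → ∀ x ∈ S, Φ x m = true := by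
    intro m hmU x hxS
    have hvx : |(f m).1 x| < 1/2 := by
      have : (f m).1 ∈ V := hmU
      rw [hVdef] at this
      have := Set.mem_iInter₂.mp this x hxS
      rw [Set.mem_preimage, Metric.mem_ball, Real.dist_eq, sub_zero] at this
      exact this
    by_contra hΦf
    rw [hfval, if_neg hΦf] at hvx
    have h1 := hpos m
    have h2 : |1 + ((m:ℝ)+1)⁻¹| = 1 + ((m:ℝ)+1)⁻¹ := abs_of_pos (by linarith)
    rw [h2] at hvx
    linarith
  have hbadfin := hnbhd U hU
  have hpre : {j : ℕ | U ∩ FF j = ∅}.Finite := by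
    have hss : {j : ℕ | U ∩ FF j = ∅} ⊆ FF ⁻¹' {F ∈ 𝓕 | U ∩ F = ∅} := by
      intro j hj
      exact ⟨hFF𝓕 j, hj⟩
    exact Set.Finite.subset (Set.Finite.preimage hFFinj.injOn hbadfin) hss
  have h1 : ∀ᶠ j in atTop, U ∩ FF j ≠ ∅ := by
    rw [← Nat.cofinite_eq_atTop, Filter.eventually_cofinite]
    simpa using hpre
  have h2 : ∀ᶠ j in atTop, N0 < nn j :=
    (hmono.tendsto_atTop).eventually (eventually_gt_atTop N0)
  filter_upwards [h1, h2] with j hj1 hj2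
  obtain ⟨g, hgU, hgF⟩ := Set.nonempty_iff_ne_empty.mpr hj1
  obtain ⟨m, rfl⟩ := (hsub _ (hFF𝓕 j)).1 hgF
  refine ⟨m, htsub (hmem m (hUprop m hgU) (lt_of_lt_of_le hj2 (hlow j m hgF))),
    hlow j m hgF, hhigh j m hgF⟩
end

section
/- Every Luzin set of reals is concentrated on each of its countable dense subsets: if L ⊆ ℝ is an uncountable set meeting every meager set in a countable set, and D ⊆ L is countable and dense in L, then for every open set U ⊆ ℝ with D ⊆ U, the set L ∖ U is countable. -/
open Filter Set Topology

/-- Every Luzin set is concentrated on each of its countable dense subsets. -/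
theorem luzin_concentrated_on_countable_dense
    (L : Set ℝ) (hL : ¬ L.Countable)
    (hLuzin : ∀ M : Set ℝ, IsMeagre M → (L ∩ M).Countable)
    (D : Set ℝ) (hDL : D ⊆ L) (hDcount : D.Countable)
    (hDdense : L ⊆ closure D) :
    ∀ U : Set ℝ, IsOpen U → D ⊆ U → (L \ U).Countable := by
  intro U hU hDU
  have hND : IsNowhereDense (closure D \ U) := by
    have hcl : IsClosed (closure D \ U) := isClosed_closure.sdiff hU
    rw [hcl.isNowhereDense_iff]
    rw [eq_empty_iff_forall_notMem]
    intro x hx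
    rcases mem_closure_iff.mp (interior_subset hx).1 (interior (closure D \ U))
      isOpen_interior hx with ⟨y, hy, hyD⟩
    exact (interior_subset hy).2 (hDU hyD)
  have hM : IsMeagre (closure D \ U) := by
    rw [isMeagre_iff_countable_union_isNowhereDense]
    exact ⟨{closure D \ U}, by simpa using hND, countable_singleton _, by simp⟩
  have : L \ U ⊆ L ∩ (closure D \ U) := fun x hx => ⟨hx.1, hDdense hx.1, hx.2⟩
  exact (hLuzin _ hM).mono this
end

section
/- Assuming the Continuum Hypothesis, there exists a set X ⊆ ℝ which has the Menger property U_fin(O,O) but not the Hurewicz property U_fin(O,Γ). -/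
open Filter Set Topology

/-- `X` has the Menger property `U_fin(O, O)`. -/
def MengerSet (X : Set ℝ) : Prop :=
  ∀ 𝒰 : ℕ → Set (Set ℝ),
    (∀ n, (∀ U ∈ 𝒰 n, IsOpen U) ∧ X ⊆ ⋃₀ 𝒰 n) →
    ∃ 𝒱 : ℕ → Set (Set ℝ),
      (∀ n, 𝒱 n ⊆ 𝒰 n ∧ (𝒱 n).Finite) ∧ X ⊆ ⋃ n, ⋃₀ 𝒱 n

/-- `X` has the Hurewicz property `U_fin(O, Γ)`. -/
def HurewiczSet (X : Set ℝ) : Prop :=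
  ∀ 𝒰 : ℕ → Set (Set ℝ),
    (∀ n, (∀ U ∈ 𝒰 n, IsOpen U) ∧ X ⊆ ⋃₀ 𝒰 n) →
    ∃ 𝒱 : ℕ → Set (Set ℝ),
      (∀ n, 𝒱 n ⊆ 𝒰 n ∧ (𝒱 n).Finite) ∧
      ∀ x ∈ X, ∀ᶠ n in atTop, x ∈ ⋃₀ 𝒱 n

lemma exists_rat_Ioo_subset {V : Set ℝ} (hV : IsOpen V) (hne : V.Nonempty) :
    ∃ a b : ℚ, (a : ℝ) < b ∧ Ioo (a : ℝ) (b : ℝ) ⊆ V := by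
  obtain ⟨x, hx⟩ := hne
  obtain ⟨ε, hε, hball⟩ := Metric.isOpen_iff.1 hV x hx
  obtain ⟨a, ha1, ha2⟩ := exists_rat_btwn (show x - ε < x by linarith)
  obtain ⟨b, hb1, hb2⟩ := exists_rat_btwn (show x < x + ε by linarith)
  refine ⟨a, b, by linarith, fun y hy => hball ?_⟩
  rw [Metric.mem_ball, Real.dist_eq, abs_lt]
  obtain ⟨h1, h2⟩ := hy
  constructor <;> linarith

lemma menger_of_lusin (L : Set ℝ) (hd : Dense L)
    (hmeets : ∀ K : Set ℝ, IsClosed K → interior K = ∅ → (L ∩ K).Countable) :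
    MengerSet L := by
  intro 𝒰 h𝒰
  rcases L.eq_empty_or_nonempty with hL | ⟨x₀, hx₀⟩
  · exact ⟨fun _ => ∅, fun n => ⟨empty_subset _, finite_empty⟩, by simp [hL]⟩
  -- enumeration of pairs of rationals
  set e : ℕ → ℚ × ℚ := fun n => Denumerable.ofNat (ℚ × ℚ) n with he
  have hesurj : Function.Surjective e := (Denumerable.eqv (ℚ × ℚ)).symm.surjective
  -- choose, for each n, a member of 𝒰 (2*n) meeting the n-th rational interval
  have hU : ∀ n : ℕ, ∃ U ∈ 𝒰 (2 * n),
      (((e n).1 : ℝ) < (e n).2 → (U ∩ Ioo ((e n).1 : ℝ) ((e n).2 : ℝ)).Nonempty) := by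
    intro n
    by_cases hab : ((e n).1 : ℝ) < (e n).2
    · obtain ⟨x, hxL, hxI⟩ := hd.exists_mem_open isOpen_Ioo (nonempty_Ioo.2 hab)
      obtain ⟨U, hU, hxU⟩ := (h𝒰 (2 * n)).2 hxL
      exact ⟨U, hU, fun _ => ⟨x, hxU, hxI⟩⟩
    · obtain ⟨U, hU, hxU⟩ := (h𝒰 (2 * n)).2 hx₀
      exact ⟨U, hU, fun h => absurd h hab⟩
  choose U hUmem hUint using hU
  -- the union of the U's is open dense
  have hdense : Dense (⋃ n, U n) := by
    rw [dense_iff_inter_open]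
    intro V hV hVne
    obtain ⟨a, b, hab, hsub⟩ := exists_rat_Ioo_subset hV hVne
    obtain ⟨n, hn⟩ := hesurj (a, b)
    have hab' : ((e n).1 : ℝ) < (e n).2 := by rw [hn]; exact_mod_cast hab
    obtain ⟨y, hy1, hy2⟩ := hUint n hab'
    refine ⟨y, ⟨hsub (by rw [hn] at hy2; exact hy2), mem_iUnion.2 ⟨n, hy1⟩⟩⟩
  -- the complement is closed nowhere dense, so meets L countably
  set K : Set ℝ := (⋃ n, U n)ᶜ with hKdef
  have hKclosed : IsClosed K := by
    apply isOpen_compl_iff.1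
    rw [compl_compl]
    exact isOpen_iUnion fun n => (h𝒰 (2 * n)).1 _ (hUmem n)
  have hKint : interior K = ∅ := interior_eq_empty_iff_dense_compl.2 (by
    rwa [hKdef, compl_compl])
  have hcnt : (L ∩ K).Countable := hmeets K hKclosed hKint
  -- enumerate L ∩ K (allowing junk when empty)
  have hy : ∃ y : ℕ → ℝ, L ∩ K ⊆ range y := by
    rcases (L ∩ K).eq_empty_or_nonempty with h | h
    · exact ⟨fun _ => 0, by simp [h]⟩
    · obtain ⟨y, hy⟩ := hcnt.exists_eq_range h
      exact ⟨y, hy.subset⟩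
  obtain ⟨y, hyrange⟩ := hy
  have hV : ∀ n : ℕ, ∃ V ∈ 𝒰 (2 * n + 1), (y n ∈ L → y n ∈ V) := by
    intro n
    by_cases h : y n ∈ L
    · obtain ⟨V, hV, hyV⟩ := (h𝒰 (2 * n + 1)).2 h
      exact ⟨V, hV, fun _ => hyV⟩
    · obtain ⟨V, hVm, _⟩ := (h𝒰 (2 * n + 1)).2 hx₀
      exact ⟨V, hVm, fun hc => absurd hc h⟩
  choose V hVmem hVy using hV
  refine ⟨fun m => if m % 2 = 0 then {U (m / 2)} else {V (m / 2)}, fun m => ?_, ?_⟩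
  · constructor
    · by_cases h : m % 2 = 0
      · obtain ⟨k, rfl⟩ : ∃ k, m = 2 * k := ⟨m / 2, by omega⟩
        have h3 : 2 * k % 2 = 0 := by omega
        have h4 : 2 * k / 2 = k := by omega
        simp only [h3, if_pos, h4, singleton_subset_iff]
        exact hUmem k
      · obtain ⟨k, rfl⟩ : ∃ k, m = 2 * k + 1 := ⟨m / 2, by omega⟩
        have h3 : (2 * k + 1) % 2 = 1 := by omega
        have h4 : (2 * k + 1) / 2 = k := by omega
        simp only [h3, h4]
        rw [if_neg one_ne_zero, singleton_subset_iff]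
        exact hVmem k
    · by_cases h : m % 2 = 0 <;> simp [h]
  · intro x hxL
    by_cases h : x ∈ ⋃ n, U n
    · obtain ⟨n, hn⟩ := mem_iUnion.1 h
      refine mem_iUnion.2 ⟨2 * n, ?_⟩
      have h2 : (2 * n) % 2 = 0 := by omega
      have h3 : (2 * n) / 2 = n := by omega
      simp only [h2, if_pos, h3]
      exact ⟨U n, rfl, hn⟩
    · have : x ∈ L ∩ K := ⟨hxL, h⟩
      obtain ⟨n, hn⟩ := hyrange this
      refine mem_iUnion.2 ⟨2 * n + 1, ?_⟩
      have h2 : (2 * n + 1) % 2 = 1 := by omega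
      have h3 : (2 * n + 1) / 2 = n := by omega
      simp only [h2, h3]
      rw [if_neg one_ne_zero]
      exact ⟨V n, rfl, by rw [← hn] at hxL ⊢; exact hVy n hxL⟩

lemma not_hurewicz_of_lusin (L : Set ℝ) (hirr : ∀ q : ℚ, (q : ℝ) ∉ L)
    (hunc : ¬ L.Countable)
    (hmeets : ∀ K : Set ℝ, IsClosed K → interior K = ∅ → (L ∩ K).Countable) :
    ¬ HurewiczSet L := by
  intro h
  -- an enumeration of the rationals inside ℝ
  set q : ℕ → ℝ := fun n => (((Denumerable.eqv ℚ).symm n : ℚ) : ℝ) with hq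
  have hqsurj : ∀ r : ℚ, ∃ n, q n = (r : ℝ) := fun r =>
    ⟨(Denumerable.eqv ℚ) r, by simp [hq]⟩
  -- the covers: open sets whose closures avoid the first rationals
  set 𝒰 : ℕ → Set (Set ℝ) := fun n => {U | IsOpen U ∧ ∀ k ≤ n, q k ∉ closure U} with h𝒰
  have hcov : ∀ n, (∀ U ∈ 𝒰 n, IsOpen U) ∧ L ⊆ ⋃₀ 𝒰 n := by
    intro n
    refine ⟨fun U hU => hU.1, fun x hx => ?_⟩
    -- x is irrational, so it is at positive distance from q 0, ..., q n
    have hpos : ∀ k, 0 < dist (q k) x := by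
      intro k
      rw [dist_pos]
      intro hc
      exact hirr _ (hc ▸ hx)
    set r : ℝ := (Finset.range (n + 1)).inf' (by simp) (fun k => dist (q k) x) with hr
    have hrpos : 0 < r := by
      rw [hr]
      apply Finset.lt_inf'_iff _ |>.2
      intro k _
      exact hpos k
    refine ⟨Metric.ball x (r / 2), ⟨Metric.isOpen_ball, fun k hk hmem => ?_⟩,
      Metric.mem_ball_self (by linarith)⟩
    have h1 : dist (q k) x ≤ r / 2 := by
      have := Metric.closure_ball_subset_closedBall hmem
      rwa [Metric.mem_closedBall] at this
    have h2 : r ≤ dist (q k) x :=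
      Finset.inf'_le _ (Finset.mem_range.2 (Nat.lt_succ_of_le hk))
    linarith
  obtain ⟨𝒱, h𝒱, hev⟩ := h 𝒰 hcov
  -- closed sets capturing the tails
  set C : ℕ → Set ℝ := fun n => ⋃ U ∈ 𝒱 n, closure U with hC
  have hCclosed : ∀ n, IsClosed (C n) := fun n =>
    (h𝒱 n).2.isClosed_biUnion fun U _ => isClosed_closure
  have hCq : ∀ n, ∀ k ≤ n, q k ∉ C n := by
    intro n k hk hmem
    obtain ⟨U, hU, hqU⟩ := mem_iUnion₂.1 hmem
    exact ((h𝒱 n).1 hU).2 k hk hqU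
  set F : ℕ → Set ℝ := fun m => ⋂ n, ⋂ (_ : m ≤ n), C n with hF
  have hFclosed : ∀ m, IsClosed (F m) :=
    fun m => isClosed_iInter fun n => isClosed_iInter fun _ => hCclosed n
  have hFq : ∀ m k, q k ∉ F m := by
    intro m k hmem
    have : q k ∈ C (max m k) := by
      have := mem_iInter.1 hmem (max m k)
      exact mem_iInter.1 this (le_max_left _ _)
    exact hCq (max m k) k (le_max_right _ _) this
  have hFint : ∀ m, interior (F m) = ∅ := by
    intro m
    rw [eq_empty_iff_forall_notMem]
    intro x hx
    obtain ⟨y, hy⟩ := Rat.denseRange_cast.exists_mem_open isOpen_interior ⟨x, hx⟩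
    obtain ⟨n, hn⟩ := hqsurj y
    exact hFq m n (hn ▸ interior_subset hy)
  -- every point of L is in some F m
  have hLsub : L ⊆ ⋃ m, F m := by
    intro x hx
    obtain ⟨m, hm⟩ := (eventually_atTop).1 (hev x hx)
    refine mem_iUnion.2 ⟨m, mem_iInter.2 fun n => mem_iInter.2 fun hn => ?_⟩
    obtain ⟨U, hU, hxU⟩ := hm n hn
    exact mem_iUnion₂.2 ⟨U, hU, subset_closure hxU⟩
  -- so L is a countable union of countable sets
  have : L.Countable := by
    have : L ⊆ ⋃ m, (L ∩ F m) := fun x hx => by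
      obtain ⟨m, hm⟩ := mem_iUnion.1 (hLsub hx)
      exact mem_iUnion.2 ⟨m, hx, hm⟩
    exact Countable.mono this
      (countable_iUnion fun m => hmeets (F m) (hFclosed m) (hFint m))
  exact hunc this

/-- Coding of subsets of `ℝ` by the rational intervals they meet. -/
def ratCode (K : Set ℝ) : Set (ℚ × ℚ) :=
  {p | ∃ y ∈ K, (p.1 : ℝ) < y ∧ y < (p.2 : ℝ)}

lemma ratCode_closed_subset {K₁ K₂ : Set ℝ} (h₂ : IsClosed K₂)
    (h : ratCode K₁ ⊆ ratCode K₂) : K₁ ⊆ K₂ := by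
  intro x hx
  rw [← h₂.closure_eq]
  rw [mem_closure_iff]
  intro V hV hxV
  obtain ⟨ε, hε, hball⟩ := Metric.isOpen_iff.1 hV x hxV
  obtain ⟨a, ha1, ha2⟩ := exists_rat_btwn (show x - ε < x by linarith)
  obtain ⟨b, hb1, hb2⟩ := exists_rat_btwn (show x < x + ε by linarith)
  have : (a, b) ∈ ratCode K₁ := ⟨x, hx, ha2, hb1⟩
  obtain ⟨y, hy, hy1, hy2⟩ := h this
  refine ⟨y, hball ?_, hy⟩
  rw [Metric.mem_ball, Real.dist_eq, abs_lt]
  constructor <;> simp at hy1 hy2 ⊢ <;> linarith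

lemma CH_down (CH : Cardinal.continuum = Cardinal.aleph 1) :
    Cardinal.continuum.{0} = Cardinal.aleph.{0} 1 := by
  have h : Cardinal.lift (Cardinal.continuum.{0}) = Cardinal.lift (Cardinal.aleph.{0} 1) := by
    rw [Cardinal.lift_continuum, Cardinal.lift_aleph, Ordinal.lift_one, CH]
  exact Cardinal.lift_inj.1 h

lemma exists_lusin (CH : Cardinal.continuum.{0} = Cardinal.aleph.{0} 1) :
    ∃ L : Set ℝ, (∀ q : ℚ, (q : ℝ) ∉ L) ∧ Dense L ∧ ¬ L.Countable ∧
      ∀ K : Set ℝ, IsClosed K → interior K = ∅ → (L ∩ K).Countable := by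
  classical
  -- the collection of closed nowhere dense subsets of ℝ
  set 𝒦 : Type := {K : Set ℝ // IsClosed K ∧ interior K = ∅} with h𝒦
  haveI : Nonempty 𝒦 := ⟨⟨∅, isClosed_empty, interior_empty⟩⟩
  -- it has at most ℵ₁ elements
  have hcard : Cardinal.mk 𝒦 ≤ Cardinal.aleph 1 := by
    have h1 : Cardinal.mk 𝒦 ≤ Cardinal.mk (Set (ℚ × ℚ)) := by
      apply Cardinal.mk_le_of_injective (f := fun K : 𝒦 => ratCode K.1)
      rintro ⟨K₁, hK₁⟩ ⟨K₂, hK₂⟩ h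
      simp only at h
      exact Subtype.ext (le_antisymm (ratCode_closed_subset hK₂.1 h.le)
        (ratCode_closed_subset hK₁.1 h.ge))
    have h2 : Cardinal.mk (Set (ℚ × ℚ)) = Cardinal.continuum := by
      rw [Cardinal.mk_set, Cardinal.mk_eq_aleph0 (ℚ × ℚ), Cardinal.two_power_aleph0]
    rw [h2, CH] at h1
    exact h1
  -- a well-ordered index type of cardinality ℵ₁, all of whose initial segments
  -- are countable
  set W : Type := (Cardinal.aleph 1).ord.ToType with hW
  have hWcard : Cardinal.mk W = Cardinal.aleph 1 := by
    rw [hW, Cardinal.mk_toType, Cardinal.card_ord]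
  have hIio : ∀ i : W, (Set.Iio i).Countable := fun i =>
    (Cardinal.countable_iff_lt_aleph_one _).2 (Cardinal.mk_Iio_ord_toType i)
  have hIic : ∀ i : W, (Set.Iic i).Countable := fun i => by
    rw [← Set.Iio_insert]
    exact (hIio i).insert i
  -- a surjective enumeration of 𝒦 by W
  obtain ⟨g⟩ : Nonempty (𝒦 ↪ W) := Cardinal.le_def 𝒦 W |>.1 (by rw [hWcard]; exact hcard)
  set f : W → 𝒦 := Function.invFun g with hf
  have hfsurj : Function.Surjective f := Function.invFun_surjective g.injective
  -- the transfinite choice of points avoiding all earlier closed nwd sets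
  have havoid : ∀ i : W, ∃ x : ℝ, (∀ r : ℚ, x ≠ (r : ℝ)) ∧ ∀ j ≤ i, x ∉ (f j).1 := by
    intro i
    haveI : Countable (Set.Iic i) := (hIic i).to_subtype
    set g' : (Set.Iic i) ⊕ ℚ → Set ℝ :=
      Sum.elim (fun j => ((f j.1).1)ᶜ) (fun r => {(r : ℝ)}ᶜ) with hg'
    have ho : ∀ s, IsOpen (g' s) := by
      rintro (j | r)
      · exact (f j.1).2.1.isOpen_compl
      · exact isClosed_singleton.isOpen_compl
    have hdense : ∀ s, Dense (g' s) := by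
      rintro (j | r)
      · exact interior_eq_empty_iff_dense_compl.1 (f j.1).2.2
      · exact dense_compl_singleton _
    obtain ⟨x, hx⟩ := (dense_iInter_of_isOpen ho hdense).nonempty
    refine ⟨x, fun r hr => ?_, fun j hj hmem => ?_⟩
    · have := mem_iInter.1 hx (Sum.inr r)
      simp [hg', hr] at this
    · have := mem_iInter.1 hx (Sum.inl ⟨j, hj⟩)
      exact this hmem
  choose x hxirr hxavoid using havoid
  -- a countable dense set of irrationals
  set D : Set ℝ := Set.range (fun r : ℚ => (r : ℝ) + Real.sqrt 2) with hD
  have hDirr : ∀ r : ℚ, (r : ℝ) ∉ D := by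
    rintro r ⟨r', hr'⟩
    apply irrational_sqrt_two
    have hr'' : (r' : ℝ) + Real.sqrt 2 = (r : ℝ) := hr'
    refine ⟨r - r', ?_⟩
    push_cast
    linarith
  have hDdense : Dense D := by
    rw [dense_iff_inter_open]
    intro V hV hVne
    obtain ⟨a, b, hab, hsub⟩ := exists_rat_Ioo_subset hV hVne
    obtain ⟨r, hr1, hr2⟩ := exists_rat_btwn
      (show (a : ℝ) - Real.sqrt 2 < (b : ℝ) - Real.sqrt 2 by linarith)
    refine ⟨(r : ℝ) + Real.sqrt 2, ⟨hsub ⟨by linarith, by linarith⟩, ⟨r, rfl⟩⟩⟩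
  set L : Set ℝ := D ∪ Set.range x with hL
  have hsing : ∀ y : ℝ, ∃ i : W, (f i).1 = {y} := by
    intro y
    obtain ⟨i, hi⟩ := hfsurj ⟨{y}, isClosed_singleton, interior_singleton y⟩
    exact ⟨i, by rw [hi]⟩
  choose jy hjy using hsing
  refine ⟨L, ?_, ?_, ?_, ?_⟩
  · -- no rationals
    rintro r (h | ⟨i, hi⟩)
    · exact hDirr r h
    · exact hxirr i r hi
  · -- dense
    exact hDdense.mono Set.subset_union_left
  · -- uncountable
    intro hc
    have hxc : (Set.range x).Countable := hc.mono Set.subset_union_right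
    have huniv : (Set.univ : Set W) ⊆ ⋃ y ∈ Set.range x, Set.Iio (jy y) := by
      intro i _
      refine Set.mem_biUnion (Set.mem_range_self i) ?_
      rw [Set.mem_Iio]
      by_contra hle
      push_neg at hle
      exact hxavoid i (jy (x i)) hle (by rw [hjy (x i)]; rfl)
    have : (Set.univ : Set W).Countable :=
      Set.Countable.mono huniv (hxc.biUnion fun y _ => hIio (jy y))
    have hWcnt : Countable W := Set.countable_univ_iff.1 this
    have : Cardinal.mk W ≤ Cardinal.aleph0 := Cardinal.mk_le_aleph0
    rw [hWcard] at this
    exact absurd this (not_le.2 Cardinal.aleph0_lt_aleph_one)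
  · -- Lusin property
    intro K hKc hKi
    obtain ⟨i₀, hi₀⟩ := hfsurj ⟨K, hKc, hKi⟩
    have hsub : L ∩ K ⊆ D ∪ (x '' Set.Iio i₀) := by
      rintro z ⟨(hz | ⟨i, rfl⟩), hzK⟩
      · exact Or.inl hz
      · refine Or.inr ⟨i, ?_, rfl⟩
        rw [Set.mem_Iio]
        by_contra hle
        push_neg at hle
        exact hxavoid i i₀ hle (by rw [hi₀]; exact hzK)
    exact Set.Countable.mono hsub
      ((Set.countable_range _).union ((hIio i₀).image x))

/-- Under CH there is a set of reals with the Menger property but without the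
Hurewicz property. -/
theorem CH_menger_not_hurewicz
    (CH : Cardinal.continuum = Cardinal.aleph 1) :
    ∃ X : Set ℝ, MengerSet X ∧ ¬ HurewiczSet X := by
  obtain ⟨L, hirr, hd, hunc, hmeets⟩ := exists_lusin (CH_down CH)
  exact ⟨L, menger_of_lusin L hd hmeets, not_hurewicz_of_lusin L hirr hunc hmeets⟩
end

section
/- If cov(M) = cof(M), then there exists a set X ⊆ ℝ which has the Menger property U_fin(O,O) but not the Hurewicz property U_fin(O,Γ). -/
open Filter Set Topology

/-- `cov(M)`: the least cardinality of a family of meager sets covering ℝ. -/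
noncomputable def covMeager : Cardinal :=
  sInf {c : Cardinal | ∃ 𝓕 : Set (Set ℝ), Cardinal.mk 𝓕 = c ∧
    (∀ M ∈ 𝓕, IsMeagre M) ∧ ⋃₀ 𝓕 = univ}

/-- `cof(M)`: the least cardinality of a cofinal family of meager sets. -/
noncomputable def cofMeager : Cardinal :=
  sInf {c : Cardinal | ∃ 𝓕 : Set (Set ℝ), Cardinal.mk 𝓕 = c ∧
    (∀ M ∈ 𝓕, IsMeagre M) ∧ ∀ M : Set ℝ, IsMeagre M → ∃ F ∈ 𝓕, M ⊆ F}

/-!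
Let `κ = cov(M) = cof(M)` and list a cofinal family of meagre sets as `(M_α)_{α<κ}`. Picking
`x_α ∉ ⋃_{β≤α} M_β` gives a non-meagre set `L` that meets every meagre set in fewer than `κ`
points. Fewer than `cov(M)` functions `ℕ → ℕ` never dominate, so every set of size `< cov(M)` is
Menger; hence `X = (L \ D) ∪ ℚ`, for a countable dense set `D` of irrationals, is Menger: once `ℚ`
is covered by an open set `V`, fewer than `κ` points of `X` remain outside `V`. A Hurewicz set
disjoint from `D` is covered by countably many closed sets missing `D`, hence is meagre; but `X`
is not meagre.
-/

open Cardinal Metric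

section Meagre

variable {X : Type*} [TopologicalSpace X]

theorem Set.Countable.isMeagre [T1Space X] [∀ x : X, (𝓝[≠] x).NeBot] {s : Set X}
    (hs : s.Countable) : IsMeagre s := by
  rw [← biUnion_of_singleton s]
  exact isMeagre_biUnion hs fun x _ =>
    (isClosed_singleton.isNowhereDense_iff.2 (interior_singleton x)).isMeagre

theorem IsClosed.isMeagre_of_disjoint_of_dense {F D : Set X} (hF : IsClosed F) (hD : Dense D)
    (hFD : Disjoint F D) : IsMeagre F := by
  rw [IsMeagre]
  exact residual_of_dense_open hF.isOpen_compl (hD.mono hFD.subset_compl_left)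

end Meagre

theorem DenseRange.dense_iUnion_ball_diff_singleton {α : Type*} [PseudoMetricSpace α]
    [∀ x : α, (𝓝[≠] x).NeBot] {u : ℕ → α} (hu : DenseRange u) {r : ℕ → ℝ}
    (hr : ∀ m, 0 < r m) : Dense (⋃ m, ball (u m) (r m) \ {u m}) := by
  refine dense_iff_inter_open.2 fun W hW hWne => ?_
  obtain ⟨m, hmW⟩ := hu.exists_mem_open hW hWne
  have hnhds : W ∩ ball (u m) (r m) ∈ 𝓝[≠] u m :=
    mem_nhdsWithin_of_mem_nhds (inter_mem (hW.mem_nhds hmW) (ball_mem_nhds _ (hr m)))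
  obtain ⟨y, ⟨hyW, hyball⟩, hyne⟩ : (W ∩ ball (u m) (r m) ∩ {u m}ᶜ).Nonempty :=
    nonempty_of_mem (inter_mem hnhds self_mem_nhdsWithin)
  exact ⟨y, hyW, mem_iUnion.2 ⟨m, hyball, hyne⟩⟩

theorem exists_seq_subcover {α : Type*} [TopologicalSpace α] [SecondCountableTopology α]
    {X : Set α} {𝒰 : Set (Set α)} (h𝒰 : ∀ U ∈ 𝒰, IsOpen U) (hX : X ⊆ ⋃₀ 𝒰)
    (hne : X.Nonempty) : ∃ u : ℕ → Set α, (∀ i, u i ∈ 𝒰) ∧ X ⊆ ⋃ i, u i := by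
  obtain ⟨T, hTc, hT𝒰, hTeq⟩ := TopologicalSpace.isOpen_sUnion_countable 𝒰 h𝒰
  rw [← hTeq] at hX
  have hTne : T.Nonempty := by
    obtain ⟨U, hU, -⟩ := mem_sUnion.1 (hX hne.some_mem)
    exact ⟨U, hU⟩
  obtain ⟨u, rfl⟩ := hTc.exists_eq_range hTne
  exact ⟨u, fun i => hT𝒰 (mem_range_self i), by rwa [← sUnion_range]⟩

theorem exists_meagre_cover_mk_eq_covMeager :
    ∃ 𝓕 : Set (Set ℝ), #𝓕 = covMeager ∧ (∀ M ∈ 𝓕, IsMeagre M) ∧ ⋃₀ 𝓕 = Set.univ :=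
  csInf_mem (s := {c | ∃ 𝓕 : Set (Set ℝ), #𝓕 = c ∧ (∀ M ∈ 𝓕, IsMeagre M) ∧ ⋃₀ 𝓕 = Set.univ})
    ⟨_, range fun r : ℝ => {r}, rfl,
      forall_mem_range.2 fun r => (countable_singleton r).isMeagre, iUnion_of_singleton ℝ⟩

theorem exists_cofinal_meagre_family_mk_eq_cofMeager :
    ∃ 𝓕 : Set (Set ℝ), #𝓕 = cofMeager ∧ (∀ M ∈ 𝓕, IsMeagre M) ∧
      ∀ M : Set ℝ, IsMeagre M → ∃ F ∈ 𝓕, M ⊆ F :=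
  csInf_mem (s := {c | ∃ 𝓕 : Set (Set ℝ), #𝓕 = c ∧ (∀ M ∈ 𝓕, IsMeagre M) ∧
    ∀ M : Set ℝ, IsMeagre M → ∃ F ∈ 𝓕, M ⊆ F})
    ⟨_, {M | IsMeagre M}, rfl, fun _ hM => hM, fun M hM => ⟨M, hM, subset_rfl⟩⟩

theorem aleph0_lt_covMeager : ℵ₀ < covMeager := by
  obtain ⟨𝓕, h𝓕mk, h𝓕, h𝓕univ⟩ := exists_meagre_cover_mk_eq_covMeager
  refine lt_of_not_ge fun hle =>
    not_isMeagre_of_isOpen (isOpen_univ (X := ℝ)) Set.univ_nonempty ?_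
  have h𝓕c : 𝓕.Countable := le_aleph0_iff_set_countable.1 (h𝓕mk.trans_le hle)
  rw [← h𝓕univ, sUnion_eq_biUnion]
  exact isMeagre_biUnion h𝓕c h𝓕

theorem exists_forall_notMem_of_mk_lt_covMeager {ι : Type} {M : ι → Set ℝ}
    (hM : ∀ i, IsMeagre (M i)) (hι : #ι < covMeager) : ∃ t, ∀ i, t ∉ M i := by
  by_contra! hcover
  refine (mk_range_le.trans_lt hι).not_ge (csInf_le' ⟨range M, rfl, forall_mem_range.2 hM, ?_⟩)
  exact eq_univ_of_forall fun t =>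
    let ⟨i, hi⟩ := hcover t
    ⟨M i, mem_range_self i, hi⟩

theorem exists_forall_exists_le_of_mk_lt_covMeager {ι : Type} (f : ι → ℕ → ℕ)
    (hι : #ι < covMeager) : ∃ g : ℕ → ℕ, ∀ i, ∃ m, f i m ≤ g m := by
  obtain ⟨u, hu⟩ := TopologicalSpace.exists_dense_seq ℝ
  set O : ι → Set ℝ := fun i => ⋃ m, ball (u m) ((f i m + 1 : ℝ)⁻¹) \ {u m}
  have hO : ∀ i, IsMeagre (O i)ᶜ := fun i => by
    rw [IsMeagre, compl_compl]
    exact residual_of_dense_open (isOpen_iUnion fun m => isOpen_ball.sdiff isClosed_singleton)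
      (hu.dense_iUnion_ball_diff_singleton fun m => by positivity)
  obtain ⟨t, ht⟩ := exists_forall_notMem_of_mk_lt_covMeager hO hι
  -- `t` lies in every `O i`, i.e. close to some `u m ≠ t`, which `g` records.
  refine ⟨fun m => ⌊(dist t (u m))⁻¹⌋₊, fun i => ?_⟩
  obtain ⟨m, htm, htu⟩ := mem_iUnion.1 (not_notMem.1 (ht i))
  have hlt : (f i m + 1 : ℝ) < (dist t (u m))⁻¹ :=
    (lt_inv_comm₀ (dist_pos.2 htu) (by positivity)).1 (mem_ball.1 htm)
  exact ⟨m, Nat.le_floor (by linarith)⟩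

theorem exists_not_isMeagre_mk_inter_lt_covMeager (h : covMeager = cofMeager) :
    ∃ L : Set ℝ, ¬ IsMeagre L ∧ ∀ N, IsMeagre N → #(L ∩ N : Set ℝ) < covMeager := by
  obtain ⟨𝓕, h𝓕mk, h𝓕, hcof⟩ := exists_cofinal_meagre_family_mk_eq_cofMeager
  obtain ⟨e⟩ : Nonempty (covMeager.ord.ToType ≃ 𝓕) :=
    Cardinal.eq.1 (by rw [mk_ord_toType, h𝓕mk, h])
  have hIio : ∀ a : covMeager.ord.ToType, #(Iio a) < covMeager := fun a => by
    simpa using mk_Iio_lt a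
  have hIic : ∀ a : covMeager.ord.ToType, #(Iic a) < covMeager := fun a => by
    rw [← Iio_insert]
    exact mk_insert_le.trans_lt (add_lt_of_lt aleph0_lt_covMeager.le (hIio a)
      (one_lt_aleph0.trans aleph0_lt_covMeager))
  choose x hx using fun a =>
    exists_forall_notMem_of_mk_lt_covMeager (fun b : Iic a => h𝓕 _ (e b).2) (hIic a)
  refine ⟨range x, fun hL => ?_, fun N hN => ?_⟩
  · obtain ⟨F, hF, hLF⟩ := hcof _ hL
    set a := e.symm ⟨F, hF⟩
    exact hx a ⟨a, le_refl a⟩ (by simpa [a] using hLF (mem_range_self a))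
  · obtain ⟨F, hF, hNF⟩ := hcof N hN
    set a := e.symm ⟨F, hF⟩
    have hsub : range x ∩ N ⊆ x '' Iio a := by
      rintro _ ⟨⟨b, rfl⟩, hb⟩
      refine ⟨b, mem_Iio.2 <| lt_of_not_ge fun hab => hx b ⟨a, hab⟩ ?_, rfl⟩
      simpa [a] using hNF hb
    calc #(range x ∩ N : Set ℝ) ≤ #(x '' Iio a) := mk_le_mk_of_subset hsub
      _ ≤ #(Iio a) := mk_image_le
      _ < covMeager := hIio a

theorem mengerSet_of_mk_lt_covMeager {X : Set ℝ} (hX : #X < covMeager) : MengerSet X := by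
  intro 𝒰 h𝒰
  rcases X.eq_empty_or_nonempty with rfl | hne
  · exact ⟨fun _ => ∅, fun _ => ⟨empty_subset _, finite_empty⟩, empty_subset _⟩
  choose u hu𝒰 hXu using fun n => exists_seq_subcover (h𝒰 n).1 (h𝒰 n).2 hne
  choose f hf using fun (x : X) n => mem_iUnion.1 (hXu n x.2)
  obtain ⟨g, hg⟩ := exists_forall_exists_le_of_mk_lt_covMeager f hX
  refine ⟨fun n => u n '' Iic (g n),
    fun n => ⟨image_subset_iff.2 fun i _ => hu𝒰 n i, (finite_Iic _).image _⟩, fun x hx => ?_⟩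
  obtain ⟨m, hm⟩ := hg ⟨x, hx⟩
  exact mem_iUnion.2 ⟨m, u m (f ⟨x, hx⟩ m), mem_image_of_mem _ hm, hf _ m⟩

-- Even-indexed covers take care of `Q`, odd-indexed ones of what the resulting open set misses.
theorem MengerSet.of_forall_isOpen_diff {X Q : Set ℝ} (hQX : Q ⊆ X) (hQ : MengerSet Q)
    (hXV : ∀ V, IsOpen V → Q ⊆ V → MengerSet (X \ V)) : MengerSet X := by
  intro 𝒰 h𝒰
  obtain ⟨𝒱₀, h𝒱₀, hQ𝒱₀⟩ :=
    hQ (fun n => 𝒰 (2 * n)) fun n => ⟨(h𝒰 _).1, hQX.trans (h𝒰 _).2⟩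
  have hV : IsOpen (⋃ n, ⋃₀ 𝒱₀ n) :=
    isOpen_iUnion fun n => isOpen_sUnion fun U hU => (h𝒰 _).1 U ((h𝒱₀ n).1 hU)
  obtain ⟨𝒱₁, h𝒱₁, hX𝒱₁⟩ := hXV _ hV hQ𝒱₀
    (fun n => 𝒰 (2 * n + 1)) fun n => ⟨(h𝒰 _).1, sdiff_subset.trans (h𝒰 _).2⟩
  refine ⟨fun n => if n % 2 = 0 then 𝒱₀ (n / 2) else 𝒱₁ (n / 2), fun n => ?_, fun x hx => ?_⟩
  · obtain ⟨k, rfl | rfl⟩ := Nat.even_or_odd' n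
    · simpa [Nat.mul_mod_right] using h𝒱₀ k
    · simpa [Nat.add_mod, show (2 * k + 1) / 2 = k by omega] using h𝒱₁ k
  · simp only [mem_iUnion]
    by_cases hxV : x ∈ ⋃ n, ⋃₀ 𝒱₀ n
    · obtain ⟨k, hk⟩ := mem_iUnion.1 hxV
      exact ⟨2 * k, by simpa [Nat.mul_mod_right] using hk⟩
    · obtain ⟨k, hk⟩ := mem_iUnion.1 (hX𝒱₁ ⟨hx, hxV⟩)
      exact ⟨2 * k + 1, by simpa [Nat.add_mod, show (2 * k + 1) / 2 = k by omega] using hk⟩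

theorem HurewiczSet.isMeagre_of_disjoint {X D : Set ℝ} (hX : HurewiczSet X) (hDc : D.Countable)
    (hD : Dense D) (hXD : Disjoint X D) : IsMeagre X := by
  obtain ⟨d, rfl⟩ := hDc.exists_eq_range hD.nonempty
  set 𝒰 : ℕ → Set (Set ℝ) := fun n => {U | IsOpen U ∧ Disjoint (closure U) (d '' Iic n)}
  have h𝒰 : ∀ n, (∀ U ∈ 𝒰 n, IsOpen U) ∧ X ⊆ ⋃₀ 𝒰 n := fun n => by
    refine ⟨fun U hU => hU.1, fun x hx => ?_⟩
    have hx : (d '' Iic n)ᶜ ∈ 𝓝 x := ((finite_Iic n).image d).isClosed.isOpen_compl.mem_nhds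
      fun ⟨k, _, hk⟩ => hXD.notMem_of_mem_left hx ⟨k, hk⟩
    obtain ⟨V, ⟨hxV, hV⟩, hVd⟩ := (hasBasis_opens_closure x).mem_iff.1 hx
    exact ⟨V, ⟨hV, disjoint_left.2 fun _ hy => hVd hy⟩, hxV⟩
  obtain ⟨𝒱, h𝒱, hX𝒱⟩ := hX 𝒰 h𝒰
  set F : ℕ → Set ℝ := fun m => ⋂ n ≥ m, closure (⋃₀ 𝒱 n)
  have hF : ∀ m, IsMeagre (F m) := fun m => by
    refine (isClosed_biInter fun n _ => isClosed_closure).isMeagre_of_disjoint_of_dense hD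
      (disjoint_left.2 ?_)
    rintro _ hF ⟨k, rfl⟩
    have hdk := mem_iInter₂.1 hF (max m k) (le_max_left m k)
    rw [(h𝒱 _).2.closure_sUnion] at hdk
    obtain ⟨U, hU, hdU⟩ := mem_iUnion₂.1 hdk
    exact ((h𝒱 _).1 hU).2.notMem_of_mem_left hdU ⟨k, le_max_right m k, rfl⟩
  refine (isMeagre_iUnion hF).mono fun x hx => mem_iUnion.2 ?_
  obtain ⟨m, hm⟩ := eventually_atTop.1 (hX𝒱 x hx)
  exact ⟨m, mem_iInter₂.2 fun n hn => subset_closure (hm n hn)⟩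

/-- If `cov(M) = cof(M)` then there is a set of reals with the Menger property
but without the Hurewicz property. -/
theorem covM_eq_cofM_menger_not_hurewicz (h : covMeager = cofMeager) :
    ∃ X : Set ℝ, MengerSet X ∧ ¬ HurewiczSet X := by
  obtain ⟨L, hL, hLN⟩ := exists_not_isMeagre_mk_inter_lt_covMeager h
  obtain ⟨D, hDirr, hDc, hD⟩ := dense_irrational.exists_countable_dense_subset
  set Q := range ((↑) : ℚ → ℝ)
  have hQD : Disjoint Q D := disjoint_left.2 fun _ ⟨q, hq⟩ hx => hDirr hx ⟨q, hq⟩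
  refine ⟨L \ D ∪ Q, ?_, fun hH => hL ?_⟩
  · refine MengerSet.of_forall_isOpen_diff subset_union_right
      (mengerSet_of_mk_lt_covMeager ((countable_range _).le_aleph0.trans_lt aleph0_lt_covMeager))
      fun V hV hQV => mengerSet_of_mk_lt_covMeager ?_
    have hV : IsMeagre Vᶜ := hV.isClosed_compl.isMeagre_of_disjoint_of_dense Rat.denseRange_cast
      (disjoint_compl_left_iff_subset.2 hQV)
    refine (mk_le_mk_of_subset ?_).trans_lt (hLN _ hV)
    rintro x ⟨hx | hx, hxV⟩
    exacts [⟨hx.1, hxV⟩, absurd (hQV hx) hxV]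
  · have hX := hH.isMeagre_of_disjoint hDc hD (disjoint_union_left.2 ⟨disjoint_sdiff_left, hQD⟩)
    exact ((hX.mono subset_union_left).union hDc.isMeagre).mono (by simp)
end
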